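/- arXiv:2212.01781 — 11 statements merged into one kernel-verified Lean document; each statement's English description precedes it below -/
import Mathlib

section
/- Let G be a finite group, H a non-trivial normal subgroup of G, and let κ and τ be integers satisfying 0 ≤ κ ≤ |H| − 1, 1 ≤ τ ≤ |H| and gcd(2, |H| − 1) ∣ κ. If τ is even, then H is a (κ,τ)-regular set of G. -/
open Pointwise

/-- `R` is a `(κ,τ)`-regular set of the Cayley graph `Cay(G,X)`: every vertex in `R`
has exactly `κ` neighbours in `R`, and every vertex outside `R` has exactly `τ`
neighbours in `R`.  In `Cay(G,X)`, `g` is adjacent to `s` iff `g⁻¹ * s ∈ X`. -/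
def IsRegularSetOfCayley {G : Type*} [Group G] (X R : Set G) (κ τ : ℤ) : Prop :=
  (∀ r ∈ R, ({s ∈ R | r⁻¹ * s ∈ X}.ncard : ℤ) = κ) ∧
  (∀ g : G, g ∉ R → ({s ∈ R | g⁻¹ * s ∈ X}.ncard : ℤ) = τ)

/-- `X` is a valid connection set for a Cayley graph on `G`: it avoids the identity
and is inverse-closed. -/
def IsConnectionSet {G : Type*} [Group G] (X : Set G) : Prop :=
  (1 : G) ∉ X ∧ X⁻¹ = X

/-- `R` is a `(κ,τ)`-regular set of the group `G`: it is a `(κ,τ)`-regular set of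
some Cayley graph on `G`. -/
def IsRegularSetOfGroup {G : Type*} [Group G] (R : Set G) (κ τ : ℤ) : Prop :=
  ∃ X : Set G, IsConnectionSet X ∧ IsRegularSetOfCayley X R κ τ

/-- `R` is a perfect code of the group `G`: a `(0,1)`-regular set of `G`. -/
def IsPerfectCodeOfGroup {G : Type*} [Group G] (R : Set G) : Prop :=
  IsRegularSetOfGroup R 0 1

/-- `C` is a code of `G` with respect to `Y` with parameter `l`: every `g ∈ G` has
exactly `l` factorizations `g = c * y` with `c ∈ C`, `y ∈ Y`. -/
def IsCodeOfGroup {G : Type*} [Group G] (C Y : Set G) (l : ℕ) : Prop :=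
  ∀ g : G, {p : G × G | p.1 ∈ C ∧ p.2 ∈ Y ∧ g = p.1 * p.2}.ncard = l

/-
Take the connection set `X` to be the union of an inverse-closed `κ`-subset of `H \ {1}` and,
for each coset `q ≠ H`, a `τ`-subset `X_q ⊆ q` with `X_{q⁻¹} = X_q⁻¹`. The neighbours in `H` of a
vertex `g` are `g (X ∩ g⁻¹H)`, so each vertex of `H` has `κ` of them and every other vertex `τ`.
Inversion splits `H \ {1}`, and any self-inverse coset, into orbits of size one and two, so an
inverse-closed subset of any even size exists, and of odd size as soon as there is an involution;
for `H \ {1}` this is the case when `|H|` is even (Cauchy), while for `|H|` odd `κ` is even.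
For cosets with `q ≠ q⁻¹` choose `X_q` freely and put `X_{q⁻¹} := X_q⁻¹`.
-/

open Finset

section InvolutiveInv
variable {α : Type*} [DecidableEq α] [InvolutiveInv α]

theorem Finset.exists_inv_eq_subset_card_eq {S : Finset α} (hS : S⁻¹ = S) {k : ℕ}
    (hk : k ≤ #S) (hpar : Even k ∨ ∃ a ∈ S, a⁻¹ = a) :
    ∃ T ⊆ S, T⁻¹ = T ∧ #T = k := by
  induction k using Nat.strong_induction_on generalizing S with
  | _ k ih =>
  by_cases hfix : ∀ a ∈ S, a⁻¹ = a
  · obtain ⟨T, hTS, rfl⟩ := exists_subset_card_eq hk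
    exact ⟨T, hTS, inv_def.trans ((image_congr fun a ha => hfix a (hTS ha)).trans image_id'),
      rfl⟩
  push Not at hfix
  obtain ⟨a, haS, ha⟩ := hfix
  obtain rfl | rfl | hk2 : k = 0 ∨ k = 1 ∨ 2 ≤ k := by omega
  · exact ⟨∅, empty_subset _, inv_empty, card_empty⟩
  · obtain ⟨b, hb, hbb⟩ := hpar.resolve_left (by decide)
    exact ⟨{b}, singleton_subset_iff.2 hb, by rw [inv_singleton, hbb], card_singleton b⟩
  set P : Finset α := {a, a⁻¹}
  have hP : P⁻¹ = P := by rw [inv_insert, inv_singleton, inv_inv, pair_comm]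
  have hPS : P ⊆ S := insert_subset haS (singleton_subset_iff.2 (hS ▸ inv_mem_inv haS))
  have hSP : (S \ P)⁻¹ = S \ P := by
    ext x; simp only [mem_inv', mem_sdiff]; rw [← mem_inv', hS, ← mem_inv' (s := P), hP]
  obtain ⟨T, hTS, hT, hTk⟩ := ih (k - 2) (by omega) hSP
    (by rw [card_sdiff_of_subset hPS, card_pair (Ne.symm ha)]; omega)
    (hpar.imp (fun ⟨m, hm⟩ => ⟨m - 1, by omega⟩) fun ⟨b, hb, hbb⟩ => ⟨b, mem_sdiff.2 ⟨hb, by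
      simp only [P, mem_insert, mem_singleton]
      rintro (rfl | rfl)
      exacts [ha hbb, ha (by simpa using hbb.symm)]⟩, hbb⟩)
  refine ⟨T ∪ P, union_subset (hTS.trans sdiff_subset) hPS, ?_, ?_⟩
  · ext x; simp only [mem_inv', mem_union]; rw [← mem_inv', hT, ← mem_inv' (s := P), hP]
  · rw [card_union_of_disjoint (disjoint_of_subset_left hTS sdiff_disjoint), hTk,
      card_pair (Ne.symm ha)]
    omega

theorem exists_inv_apply_eq_apply_inv {Q : Type*} [InvolutiveInv Q] (c : Q → Finset α) (hc : ∀ q, q⁻¹ = q → (c q)⁻¹ = c q) :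
    ∃ f : Q → Finset α, (∀ q, f q = c q ∨ f q = (c q⁻¹)⁻¹) ∧ ∀ q, (f q)⁻¹ = f q⁻¹ := by
  -- a well-order decides, in each pair `{q, q⁻¹}`, whose set is kept and whose is inverted
  let : LinearOrder Q := IsWellOrder.linearOrder WellOrderingRel
  refine ⟨fun q => if q ≤ q⁻¹ then c q else (c q⁻¹)⁻¹,
    fun q => by by_cases h : q ≤ q⁻¹ <;> simp [h], fun q => ?_⟩
  rcases lt_trichotomy q q⁻¹ with h | h | h
  · simp [h.le, h.not_ge]
  · simp [← h, hc q h.symm]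
  · ext; simp [h.le, h.not_ge]

end InvolutiveInv

section Group

variable {G : Type*} [Group G]

theorem exists_ne_one_inv_eq_of_even_card [Finite G] (h : Even (Nat.card G)) :
    ∃ x : G, x ≠ 1 ∧ x⁻¹ = x := by
  have : Fact (Nat.Prime 2) := ⟨Nat.prime_two⟩
  obtain ⟨x, hx⟩ := exists_prime_orderOf_dvd_card' 2 h.two_dvd
  exact ⟨x, by rintro rfl; simp at hx, inv_eq_self_of_orderOf_eq_two hx⟩

theorem Subgroup.ncard_sep_inv_mul_mem (H : Subgroup G) (X : Set G) (g : G) :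
    {s ∈ (H : Set G) | g⁻¹ * s ∈ X}.ncard = {x ∈ X | (x : G ⧸ H) = g⁻¹}.ncard := by
  have : {s ∈ (H : Set G) | g⁻¹ * s ∈ X} = (g * ·) '' {x ∈ X | (x : G ⧸ H) = g⁻¹} := by
    rw [Set.image_mul_left]
    ext s
    simp [QuotientGroup.eq, and_comm]
  rw [this, Set.ncard_image_of_injective _ (mul_right_injective g)]

theorem Subgroup.exists_finset_card_eq_in_coset [Fintype G] [DecidableEq G] (H : Subgroup G)
    [H.Normal] (q : G ⧸ H) {τ : ℕ} (hτ : τ ≤ Nat.card H) (hτpar : Even τ) :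
    ∃ T : Finset G, (∀ x ∈ T, (x : G ⧸ H) = q) ∧ (q⁻¹ = q → T⁻¹ = T) ∧ #T = τ := by
  classical
  set S : Finset G := {x | (x : G ⧸ H) = q}
  have hS : #S = Nat.card H := by
    have hSq : (S : Set G) = QuotientGroup.mk ⁻¹' {q} := by ext; simp [S]
    rw [← Set.ncard_coe_finset, hSq, ← Nat.card_coe_set_eq, QuotientGroup.card_preimage_mk,
      Nat.card_unique (α := ({q} : Set (G ⧸ H))), mul_one]
  by_cases hq : q⁻¹ = q
  · have hSinv : S⁻¹ = S := by ext x; simp [S, inv_eq_iff_eq_inv, hq]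
    obtain ⟨T, hTS, hT, hTcard⟩ := exists_inv_eq_subset_card_eq hSinv (hS ▸ hτ) (.inl hτpar)
    exact ⟨T, fun x hx => by simpa [S] using hTS hx, fun _ => hT, hTcard⟩
  · obtain ⟨T, hTS, hTcard⟩ := exists_subset_card_eq (hS ▸ hτ)
    exact ⟨T, fun x hx => by simpa [S] using hTS hx, fun h => absurd h hq, hTcard⟩

theorem Subgroup.exists_inv_eq_finset_card_eq [Fintype G] [DecidableEq G] (H : Subgroup G)
    {κ : ℕ} (hκ : κ ≤ Nat.card H - 1) (hκpar : Nat.gcd 2 (Nat.card H - 1) ∣ κ) :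
    ∃ A : Finset G, (∀ a ∈ A, a ∈ H) ∧ 1 ∉ A ∧ A⁻¹ = A ∧ #A = κ := by
  classical
  set S : Finset G := (H : Set G).toFinset.erase 1
  have hS : #S = Nat.card H - 1 := by
    rw [card_erase_of_mem (by simp), Set.toFinset_card, ← Nat.card_eq_fintype_card]
    rfl
  have hSinv : S⁻¹ = S := by ext; simp [S]
  have hpar : Even κ ∨ ∃ a ∈ S, a⁻¹ = a := by
    rcases Nat.even_or_odd (Nat.card H) with heven | hodd
    · obtain ⟨x, hx1, hxinv⟩ := exists_ne_one_inv_eq_of_even_card heven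
      exact .inr ⟨x, by simpa [S] using hx1, by simpa using congrArg Subtype.val hxinv⟩
    · left
      rwa [Nat.gcd_eq_left (even_iff_two_dvd.mp (Nat.Odd.sub_odd hodd odd_one)),
        ← even_iff_two_dvd] at hκpar
  obtain ⟨A, hAS, hA, hAcard⟩ := Finset.exists_inv_eq_subset_card_eq hSinv (hS ▸ hκ) hpar
  exact ⟨A, fun a ha => by simpa [S] using (mem_erase.mp (hAS ha)).2,
    fun h => by simpa [S] using hAS h, hA, hAcard⟩

theorem Subgroup.exists_inv_eq_coset_family [Fintype G] [DecidableEq G] (H : Subgroup G)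
    [H.Normal] {κ τ : ℕ} (hκ : κ ≤ Nat.card H - 1) (hκpar : Nat.gcd 2 (Nat.card H - 1) ∣ κ)
    (hτ : τ ≤ Nat.card H) (hτpar : Even τ) :
    ∃ f : G ⧸ H → Finset G, (∀ q, ∀ x ∈ f q, (x : G ⧸ H) = q) ∧ (∀ q, (f q)⁻¹ = f q⁻¹) ∧
      1 ∉ f 1 ∧ #(f 1) = κ ∧ ∀ q ≠ 1, #(f q) = τ := by
  classical
  obtain ⟨A, hAH, hA1, hAinv, hAcard⟩ := H.exists_inv_eq_finset_card_eq hκ hκpar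
  choose T hTq hTinv hTcard using fun q => H.exists_finset_card_eq_in_coset q hτ hτpar
  set c : G ⧸ H → Finset G := fun q => if q = 1 then A else T q
  have hcq : ∀ q, ∀ x ∈ c q, (x : G ⧸ H) = q := by
    intro q x hx
    by_cases hq : q = 1
    · simp only [c, hq, if_true] at hx
      exact hq ▸ (QuotientGroup.eq_one_iff x).mpr (hAH x hx)
    · simp only [c, hq, if_false] at hx
      exact hTq q x hx
  have hcinv : ∀ q, q⁻¹ = q → (c q)⁻¹ = c q := by
    intro q hq
    by_cases h1 : q = 1
    · simp [c, h1, hAinv]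
    · simp [c, h1, hTinv q hq]
  obtain ⟨f, hfc, hfinv⟩ := exists_inv_apply_eq_apply_inv c hcinv
  have hf1 : f 1 = A := by
    rcases hfc 1 with h | h <;> simpa [c, hAinv] using h
  refine ⟨f, fun q x hx => ?_, hfinv, hf1 ▸ hA1, hf1 ▸ hAcard, fun q hq => ?_⟩
  · rcases hfc q with h | h <;> rw [h] at hx
    · exact hcq q x hx
    · simpa using hcq q⁻¹ x⁻¹ (mem_inv'.mp hx)
  · rcases hfc q with h | h <;> simp [h, c, hq, hTcard]

theorem isRegularSetOfGroup_of_coset_family [DecidableEq G] (H : Subgroup G) [H.Normal]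
    (f : G ⧸ H → Finset G) (hf : ∀ q, ∀ x ∈ f q, (x : G ⧸ H) = q) (hfinv : ∀ q, (f q)⁻¹ = f q⁻¹)
    (hf1 : 1 ∉ f 1) {κ τ : ℕ} (hκ : #(f 1) = κ) (hτ : ∀ q ≠ 1, #(f q) = τ) :
    IsRegularSetOfGroup (H : Set G) κ τ := by
  set X : Set G := {x | x ∈ f x}
  have hXq : ∀ q : G ⧸ H, {x ∈ X | (x : G ⧸ H) = q} = f q := by
    intro q
    ext x
    refine ⟨fun ⟨hx, hxq⟩ => hxq ▸ hx, fun hx => ⟨?_, hf q x hx⟩⟩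
    show x ∈ f x
    rwa [hf q x hx]
  refine ⟨X, ⟨hf1, ?_⟩, fun r hr => ?_, fun g hg => ?_⟩
  · ext x
    simp [X, ← hfinv, QuotientGroup.mk_inv]
  · rw [H.ncard_sep_inv_mul_mem, hXq, Set.ncard_coe_finset,
      (QuotientGroup.eq_one_iff _).mpr (inv_mem hr), hκ]
  · rw [H.ncard_sep_inv_mul_mem, hXq, Set.ncard_coe_finset,
      hτ _ (by rwa [Ne, QuotientGroup.eq_one_iff, inv_mem_iff])]

end Group

theorem statement_0_general {G : Type*} [Group G] [Fintype G] (H : Subgroup G) [H.Normal]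
    (κ τ : ℤ)
    (hκ0 : 0 ≤ κ) (hκ1 : κ ≤ (Nat.card H : ℤ) - 1)
    (hτ0 : 1 ≤ τ) (hτ1 : τ ≤ (Nat.card H : ℤ))
    (hgcd : ((Nat.gcd 2 (Nat.card H - 1) : ℕ) : ℤ) ∣ κ)
    (hτeven : Even τ) :
    IsRegularSetOfGroup (H : Set G) κ τ := by
  classical
  lift κ to ℕ using hκ0
  lift τ to ℕ using by omega
  have hHpos : 0 < Nat.card H := Nat.card_pos
  obtain ⟨f, hf, hfinv, hf1, hfκ, hfτ⟩ := H.exists_inv_eq_coset_family (κ := κ) (τ := τ)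
    (by omega) (Int.natCast_dvd_natCast.mp hgcd) (by omega) (by exact_mod_cast hτeven)
  exact isRegularSetOfGroup_of_coset_family H f hf hfinv hf1 hfκ hfτ

theorem statement_0 {G : Type*} [Group G] [Fintype G] (H : Subgroup G) [H.Normal]
    (hH : H ≠ ⊥) (κ τ : ℤ)
    (hκ0 : 0 ≤ κ) (hκ1 : κ ≤ (Nat.card H : ℤ) - 1)
    (hτ0 : 1 ≤ τ) (hτ1 : τ ≤ (Nat.card H : ℤ))
    (hgcd : ((Nat.gcd 2 (Nat.card H - 1) : ℕ) : ℤ) ∣ κ)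
    (hτeven : Even τ) :
    IsRegularSetOfGroup (H : Set G) κ τ :=
  statement_0_general H κ τ hκ0 hκ1 hτ0 hτ1 hgcd hτeven
end

section
/- Let G be a finite group, H a non-trivial normal subgroup of G, and let κ and τ be integers satisfying 0 ≤ κ ≤ |H| − 1, 1 ≤ τ ≤ |H| and gcd(2, |H| − 1) ∣ κ. If τ is odd, then H is a (κ,τ)-regular set of G if and only if H is a perfect code of G. -/
open Pointwise

/-!
Both sides are equivalent to the property that every element `C` of `G ⧸ H` with `C⁻¹ = C`
contains some `z` with `z⁻¹ = z`. Counting neighbours from a vertex `g`, `H` is `(κ,τ)`-regular in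
`Cay(G,X)` iff `X` meets `H` in `κ` elements and every other coset in `τ` elements. A
self-inverse coset `C ≠ H` meets the inverse-closed set `X` in an inverse-closed set, which has
even size unless it contains a fixed point of inversion; so an odd `τ` forces the lifting property.
Conversely, with the lifting property one chooses inverse-closed subsets of the prescribed sizes
in the self-inverse cosets (for `H \ {1}` the gcd condition supplies either an even `κ` or an
involution in `H`), and mutually inverse subsets in each pair of cosets `C ≠ C⁻¹`.
-/

section InvClosed

variable {G : Type*} [Group G]

theorem exists_inv_eq_self_of_odd_ncard {T : Set G} (hT : T⁻¹ = T) (hodd : Odd T.ncard) :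
    ∃ z ∈ T, z⁻¹ = z := by
  by_contra! hfree
  have hfin : T.Finite := Set.finite_of_ncard_pos hodd.pos
  have hzero : (hfin.toFinset.card : ZMod 2) = 0 := by
    rw [Finset.card_eq_sum_ones, Nat.cast_sum, Nat.cast_one]
    refine Finset.sum_involution (fun a _ => a⁻¹) (fun _ _ => by decide)
      (fun a ha _ => hfree a (hfin.mem_toFinset.mp ha)) (fun a ha => ?_) (fun a _ => inv_inv a)
    rw [hfin.mem_toFinset] at ha ⊢
    rwa [← Set.mem_inv, hT]
  rw [ZMod.natCast_eq_zero_iff_even, ← Set.ncard_eq_toFinset_card T hfin] at hzero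
  exact Nat.not_even_iff_odd.mpr hodd hzero

theorem exists_inv_closed_pair_subset {U : Set G} (hU : U⁻¹ = U) (h2 : 1 < U.ncard) :
    ∃ P ⊆ U, P⁻¹ = P ∧ P.ncard = 2 := by
  obtain ⟨z, hz⟩ := Set.nonempty_of_ncard_ne_zero (by omega : U.ncard ≠ 0)
  have hinv_mem : ∀ {x}, x ∈ U → x⁻¹ ∈ U := fun hx => hU ▸ Set.inv_mem_inv.mpr hx
  by_cases hzz : z⁻¹ = z
  · obtain ⟨w, hw, hwz⟩ := Set.exists_ne_of_one_lt_ncard h2 z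
    by_cases hww : w⁻¹ = w
    · refine ⟨{w, z}, Set.insert_subset hw (Set.singleton_subset_iff.mpr hz), ?_,
        Set.ncard_pair hwz⟩
      rw [Set.inv_insert, Set.inv_singleton, hww, hzz]
    · refine ⟨{w, w⁻¹}, Set.insert_subset hw (Set.singleton_subset_iff.mpr (hinv_mem hw)), ?_,
        Set.ncard_pair (Ne.symm hww)⟩
      rw [Set.inv_insert, Set.inv_singleton, inv_inv, Set.pair_comm]
  · refine ⟨{z, z⁻¹}, Set.insert_subset hz (Set.singleton_subset_iff.mpr (hinv_mem hz)), ?_,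
      Set.ncard_pair (Ne.symm hzz)⟩
    rw [Set.inv_insert, Set.inv_singleton, inv_inv, Set.pair_comm]

theorem exists_inv_closed_subset_ncard {T : Set G} (hT : T⁻¹ = T) {k : ℕ} (hk : k ≤ T.ncard)
    (hpar : Even k ∨ ∃ z ∈ T, z⁻¹ = z) : ∃ S ⊆ T, S⁻¹ = S ∧ S.ncard = k := by
  induction k using Nat.strong_induction_on with
  | _ k ih =>
  match k, hk, hpar, ih with
  | 0, _, _, _ => exact ⟨∅, Set.empty_subset _, Set.inv_empty, Set.ncard_empty _⟩
  | 1, _, hpar, _ =>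
    obtain ⟨z, hz, hzz⟩ := hpar.resolve_left (by decide)
    exact ⟨{z}, Set.singleton_subset_iff.mpr hz, by rw [Set.inv_singleton, hzz],
      Set.ncard_singleton z⟩
  | k + 2, hk, hpar, ih =>
    have hfin : T.Finite := Set.finite_of_ncard_pos (by omega)
    obtain ⟨S, hST, hS, hSk⟩ := ih k (by omega) (by omega)
      (by simpa [Nat.even_add_one] using hpar)
    obtain ⟨P, hPsub, hP, hP2⟩ := exists_inv_closed_pair_subset (U := T \ S)
      ((Set.preimage_sdiff _ _ _).trans (congrArg₂ (· \ ·) hT hS))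
      (by rw [Set.ncard_sdiff hST (hfin.subset hST)]; omega)
    refine ⟨S ∪ P, Set.union_subset hST (hPsub.trans Set.sdiff_subset),
      by rw [Set.union_inv, hS, hP], ?_⟩
    rw [Set.ncard_union_eq (Set.disjoint_sdiff_right.mono_right hPsub) (hfin.subset hST)
      (hfin.subset (hPsub.trans Set.sdiff_subset)), hSk, hP2]

end InvClosed

section Cosets

variable {G : Type*} [Group G] (H : Subgroup G)

theorem ncard_setOf_mk_eq (C : G ⧸ H) : {x : G | (x : G ⧸ H) = C}.ncard = Nat.card H := by
  obtain ⟨g, rfl⟩ := QuotientGroup.mk_surjective C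
  have hcoset : {x : G | (x : G ⧸ H) = g} = g • (H : Set G) := by
    ext x
    rw [Set.mem_ofPred_eq, Set.mem_smul_set_iff_inv_smul_mem, smul_eq_mul, SetLike.mem_coe,
      eq_comm, QuotientGroup.eq]
  rw [hcoset, Set.ncard_smul_set, ← Nat.card_coe_set_eq, SetLike.coe_sort_coe]

theorem ncard_subgroup_sep_inv_mul_mem (X : Set G) (g : G) :
    {s ∈ (H : Set G) | g⁻¹ * s ∈ X}.ncard = {x ∈ X | (x : G ⧸ H) = (g⁻¹ : G)}.ncard := by
  have htranslate : {s ∈ (H : Set G) | g⁻¹ * s ∈ X} = g • {x ∈ X | (x : G ⧸ H) = (g⁻¹ : G)} := by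
    ext s
    rw [Set.mem_smul_set_iff_inv_smul_mem, smul_eq_mul, Set.mem_ofPred_eq, Set.mem_ofPred_eq,
      QuotientGroup.eq, mul_inv_rev, inv_inv, mul_inv_cancel_right, inv_mem_iff, SetLike.mem_coe,
      and_comm]
  rw [htranslate, Set.ncard_smul_set]

theorem isRegularSetOfCayley_iff [H.Normal] (X : Set G) (κ τ : ℤ) :
    IsRegularSetOfCayley X (H : Set G) κ τ ↔
      ({x ∈ X | (x : G ⧸ H) = 1}.ncard : ℤ) = κ ∧
        ∀ C : G ⧸ H, C ≠ 1 → ({x ∈ X | (x : G ⧸ H) = C}.ncard : ℤ) = τ := by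
  have hmk : ∀ g : G, ((g⁻¹ : G) : G ⧸ H) = 1 ↔ g ∈ (H : Set G) := fun g => by
    rw [QuotientGroup.mk_inv, inv_eq_one, QuotientGroup.eq_one_iff, SetLike.mem_coe]
  simp only [IsRegularSetOfCayley, ncard_subgroup_sep_inv_mul_mem]
  refine and_congr ⟨fun h => by simpa using h 1 H.one_mem, fun h r hr => (hmk r).mpr hr ▸ h⟩
    ⟨fun h C hC => ?_, fun h g hg => h _ (mt (hmk g).mp hg)⟩
  obtain ⟨g, rfl⟩ := QuotientGroup.mk_surjective C
  simpa using h g⁻¹ (by simpa [← hmk] using hC)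

end Cosets

theorem exists_inv_equivariant_choice {α γ : Type*} [InvolutiveInv α] [InvolutiveInv γ]
    (p : α → γ → Prop) (hp : ∀ a c, p a c → p a⁻¹ c⁻¹)
    (h : ∀ a, ∃ c, p a c ∧ (a⁻¹ = a → c⁻¹ = c)) :
    ∃ f : α → γ, (∀ a, p a (f a)) ∧ ∀ a, (f a)⁻¹ = f a⁻¹ := by
  choose S hS hSfix using h
  -- orient each pair `{a, a⁻¹}` by an arbitrary linear order, and choose on its smaller element
  let _ : LinearOrder α := IsWellOrder.linearOrder WellOrderingRel
  refine ⟨fun a => if a ≤ a⁻¹ then S a else (S a⁻¹)⁻¹, fun a => ?_, fun a => ?_⟩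
  · dsimp only
    split_ifs
    · exact hS a
    · simpa using hp _ _ (hS a⁻¹)
  · rcases lt_trichotomy a a⁻¹ with hlt | heq | hgt
    · simp [hlt.le, hlt.not_ge]
    · simp only [← heq, le_refl, if_true]
      exact hSfix a heq.symm
    · simp [hgt.le, hgt.not_ge]

section Involutions

variable {G : Type*} [Group G] (H : Subgroup G) [H.Normal]

def InvolutionsLift : Prop :=
  ∀ C : G ⧸ H, C⁻¹ = C → ∃ z : G, (z : G ⧸ H) = C ∧ z⁻¹ = z

variable {H}

theorem inv_sep_mk_eq (X : Set G) (C : G ⧸ H) :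
    {x ∈ X | (x : G ⧸ H) = C}⁻¹ = {x ∈ X⁻¹ | (x : G ⧸ H) = C⁻¹} := by
  ext x
  simp [inv_eq_iff_eq_inv]

theorem involutionsLift_of_isRegularSetOfGroup {κ τ : ℤ} (hτ : Odd τ)
    (hreg : IsRegularSetOfGroup (H : Set G) κ τ) : InvolutionsLift H := by
  obtain ⟨X, ⟨-, hXinv⟩, hX⟩ := hreg
  intro C hC
  rcases eq_or_ne C 1 with rfl | hC1
  · exact ⟨1, QuotientGroup.mk_one H, inv_one⟩
  have hcard := ((isRegularSetOfCayley_iff H X κ τ).mp hX).2 C hC1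
  obtain ⟨z, hz, hzz⟩ := exists_inv_eq_self_of_odd_ncard (T := {x ∈ X | (x : G ⧸ H) = C})
    (by rw [inv_sep_mk_eq, hXinv, hC]) (by rw [← Int.odd_coe_nat, hcard]; exact hτ)
  exact ⟨z, hz.2, hzz⟩

end Involutions

section Construction

variable {G : Type*} [Group G] {H : Subgroup G} [H.Normal]

open scoped Classical in
theorem exists_inv_closed_subset_coset (hlift : InvolutionsLift H) {k t : ℕ}
    (hk : k < Nat.card H) (hkpar : Nat.gcd 2 (Nat.card H - 1) ∣ k) (ht : t ≤ Nat.card H)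
    (C : G ⧸ H) :
    ∃ s : Set G, (s ⊆ {x : G | (x : G ⧸ H) = C} \ {1} ∧ s.ncard = if C = 1 then k else t) ∧
      (C⁻¹ = C → s⁻¹ = s) := by
  set T := {x : G | (x : G ⧸ H) = C} \ {1} with hT_def
  by_cases hCinv : C⁻¹ = C
  swap
  · have hC1 : C ≠ 1 := fun h => hCinv (h ▸ inv_one)
    obtain ⟨s, hsT, hst⟩ := Set.exists_subset_card_eq (s := {x : G | (x : G ⧸ H) = C})
      (n := t) (by rwa [ncard_setOf_mk_eq])
    refine ⟨s, ⟨fun x hx => ⟨hsT hx, ?_⟩, by rw [if_neg hC1, hst]⟩, fun h => absurd h hCinv⟩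
    rintro rfl
    exact hC1 ((hsT hx).symm.trans (QuotientGroup.mk_one H))
  have hT : T⁻¹ = T := by
    ext x
    simp [T, inv_eq_iff_eq_inv, hCinv]
  obtain ⟨s, hsT, hs, hsk⟩ : ∃ s ⊆ T, s⁻¹ = s ∧ s.ncard = if C = 1 then k else t := by
    split_ifs with hC1
    · subst hC1
      have hcard : T.ncard = Nat.card H - 1 := by
        rw [Set.ncard_sdiff (by simp), ncard_setOf_mk_eq, Set.ncard_singleton]
      refine exists_inv_closed_subset_ncard hT (by omega) ?_
      by_cases h2 : 2 ∣ Nat.card H - 1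
      · exact Or.inl (even_iff_two_dvd.mpr (Nat.gcd_eq_left h2 ▸ hkpar))
      · exact Or.inr (exists_inv_eq_self_of_odd_ncard hT (by rw [hcard, Nat.odd_iff]; omega))
    · obtain ⟨z, hz, hzz⟩ := hlift C hCinv
      have h1T : (1 : G) ∉ {x : G | (x : G ⧸ H) = C} := fun h => hC1 (h.symm.trans rfl)
      have hcard : T.ncard = Nat.card H := by
        rw [hT_def, Set.sdiff_singleton_eq_self h1T, ncard_setOf_mk_eq]
      have hzT : z ∈ T := ⟨hz, fun h => h1T (Set.mem_singleton_iff.mp h ▸ hz)⟩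
      exact exists_inv_closed_subset_ncard hT (hcard ▸ ht) (Or.inr ⟨z, hzT, hzz⟩)
  exact ⟨s, ⟨hsT, hsk⟩, fun _ => hs⟩

open scoped Classical in
theorem isRegularSetOfGroup_of_involutionsLift (hlift : InvolutionsLift H) {k t : ℕ}
    (hk : k < Nat.card H) (hkpar : Nat.gcd 2 (Nat.card H - 1) ∣ k) (ht : t ≤ Nat.card H) :
    IsRegularSetOfGroup (H : Set G) k t := by
  obtain ⟨T, hT, hTinv⟩ := exists_inv_equivariant_choice
    (fun C s => s ⊆ {x : G | (x : G ⧸ H) = C} \ {1} ∧ s.ncard = if C = 1 then k else t)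
    (fun C s ⟨hsub, hcard⟩ => ⟨fun x hx => by simpa [inv_eq_iff_eq_inv] using hsub hx,
      by simpa [Set.ncard_inv] using hcard⟩)
    (exists_inv_closed_subset_coset hlift hk hkpar ht)
  have hfiber : ∀ C : G ⧸ H, {x ∈ {x : G | x ∈ T x} | (x : G ⧸ H) = C} = T C := fun C => by
    ext x
    refine ⟨fun ⟨hx, hxC⟩ => hxC ▸ hx, fun hx => ?_⟩
    have hxC : (x : G ⧸ H) = C := ((hT C).1 hx).1
    exact ⟨show x ∈ T x by rwa [hxC], hxC⟩
  refine ⟨{x : G | x ∈ T x}, ⟨fun h => ((hT _).1 h).2 rfl, ?_⟩,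
    (isRegularSetOfCayley_iff H _ _ _).mpr ⟨?_, fun C hC => ?_⟩⟩
  · ext x
    simp only [Set.mem_inv, Set.mem_ofPred_eq, QuotientGroup.mk_inv, ← hTinv, inv_inv]
  · rw [hfiber, (hT 1).2, if_pos rfl]
  · rw [hfiber, (hT C).2, if_neg hC]

end Construction

theorem statement_1_general {G : Type*} [Group G] [Fintype G] (H : Subgroup G) [H.Normal]
    (κ τ : ℤ)
    (hκ0 : 0 ≤ κ) (hκ1 : κ ≤ (Nat.card H : ℤ) - 1)
    (hτ0 : 1 ≤ τ) (hτ1 : τ ≤ (Nat.card H : ℤ))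
    (hgcd : ((Nat.gcd 2 (Nat.card H - 1) : ℕ) : ℤ) ∣ κ)
    (hτodd : Odd τ) :
    IsRegularSetOfGroup (H : Set G) κ τ ↔ IsPerfectCodeOfGroup (H : Set G) := by
  have hH1 : 0 < Nat.card H := Nat.card_pos
  refine ⟨fun hreg => ?_, fun hcode => ?_⟩
  · have hcode := isRegularSetOfGroup_of_involutionsLift
      (involutionsLift_of_isRegularSetOfGroup hτodd hreg) (k := 0) (t := 1) hH1 (dvd_zero _) hH1
    exact_mod_cast hcode
  · lift κ to ℕ using hκ0
    lift τ to ℕ using by omega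
    exact isRegularSetOfGroup_of_involutionsLift
      (involutionsLift_of_isRegularSetOfGroup odd_one hcode) (by omega) (by exact_mod_cast hgcd)
      (by omega)

theorem statement_1 {G : Type*} [Group G] [Fintype G] (H : Subgroup G) [H.Normal]
    (hH : H ≠ ⊥) (κ τ : ℤ)
    (hκ0 : 0 ≤ κ) (hκ1 : κ ≤ (Nat.card H : ℤ) - 1)
    (hτ0 : 1 ≤ τ) (hτ1 : τ ≤ (Nat.card H : ℤ))
    (hgcd : ((Nat.gcd 2 (Nat.card H - 1) : ℕ) : ℤ) ∣ κ)
    (hτodd : Odd τ) :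
    IsRegularSetOfGroup (H : Set G) κ τ ↔ IsPerfectCodeOfGroup (H : Set G) :=
  statement_1_general H κ τ hκ0 hκ1 hτ0 hτ1 hgcd hτodd
end

section
/- Let G be a finite group and H a non-trivial normal subgroup of G whose index |G/H| is odd. Then H is a (κ,τ)-regular set of G for every pair of integers κ and τ satisfying 0 ≤ κ ≤ |H| − 1, 1 ≤ τ ≤ |H| and gcd(2, |H| − 1) ∣ κ. -/
open Pointwise

/-!
The connection set `X` is built coset by coset. In `Cay(G, X)` the neighbours in `H` of `g` are
`g • (X ∩ g⁻¹H)`, so it suffices that `X ∩ H` has `κ` elements and every other coset meets `X` in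
`τ` elements. In `H` take an inverse-closed `A ⊆ H \ {1}` with `|A| = κ`: inversion pairs off the
non-involutions, and the gcd condition makes `κ` even unless `|H|` is even, in which case `H`
contains an involution (Cauchy). Since `|G/H|` is odd, the nontrivial cosets pair off as
`{qH, q⁻¹H}`; put a `τ`-subset of `qH` into `X` and its inverse into `q⁻¹H`.
-/

namespace Function.Involutive

variable {α : Type*} {f : α → α}

theorem exists_mapsTo_subset_ncard_eq (hf : Involutive f) {n : ℕ} :
    ∀ {S : Set α}, Set.MapsTo f S S → n ≤ S.ncard → (Even n ∨ ∃ x ∈ S, f x = x) →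
      ∃ A ⊆ S, A.ncard = n ∧ Set.MapsTo f A A := by
  induction n using Nat.twoStepInduction with
  | zero => exact fun _ _ _ => ⟨∅, Set.empty_subset _, Set.ncard_empty _, Set.mapsTo_empty _ _⟩
  | one =>
    rintro S - - (h | ⟨x, hx, hfx⟩)
    · exact absurd h (by decide)
    · exact ⟨{x}, by simpa, Set.ncard_singleton x, by simp [Set.MapsTo, hfx]⟩
  | more n ih _ =>
    intro S hS hn hpar
    by_cases hfix : ∀ x ∈ S, f x = x
    · obtain ⟨A, hAS, hA⟩ := Set.exists_subset_card_eq hn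
      exact ⟨A, hAS, hA, fun x hx => by rwa [hfix x (hAS hx)]⟩
    push Not at hfix
    obtain ⟨x, hx, hfx⟩ := hfix
    have hSfin : S.Finite := Set.finite_of_ncard_pos (by omega)
    -- remove the 2-orbit `{x, f x}`, recurse, and put it back
    have hpair : ({x, f x} : Set α) ⊆ S := Set.insert_subset hx (Set.singleton_subset_iff.2 (hS hx))
    have hS' : Set.MapsTo f (S \ {x, f x}) (S \ {x, f x}) := by
      rintro y ⟨hy, hyx⟩
      refine ⟨hS hy, fun h => hyx ?_⟩
      rcases h with h | h
      · exact Or.inr (show y = f x by rw [← h, hf])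
      · exact Or.inl (hf.injective h)
    have hcard : (S \ {x, f x}).ncard = S.ncard - 2 := by
      rw [Set.ncard_sdiff hpair, Set.ncard_pair (Ne.symm hfx)]
    have hpar' : Even n ∨ ∃ y ∈ S \ {x, f x}, f y = y := by
      refine hpar.imp (fun h => by simpa [Nat.even_add] using h) ?_
      rintro ⟨y, hy, hfy⟩
      refine ⟨y, ⟨hy, ?_⟩, hfy⟩
      rintro (rfl | rfl)
      · exact hfx hfy
      · exact hfx (by rw [← hfy, hf])
    obtain ⟨A, hAS, hA, hAf⟩ := ih hS' (by omega) hpar'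
    have hxA : x ∉ insert (f x) A := by
      rintro (h | h)
      · exact hfx h.symm
      · exact (hAS h).2 (Or.inl rfl)
    have hfxA : f x ∉ A := fun h => (hAS h).2 (Or.inr rfl)
    have hAfin : A.Finite := hSfin.subset (hAS.trans Set.sdiff_subset)
    refine ⟨insert x (insert (f x) A), ?_, ?_, ?_⟩
    · exact Set.insert_subset hx (Set.insert_subset (hS hx) (hAS.trans Set.sdiff_subset))
    · rw [Set.ncard_insert_of_notMem hxA (hAfin.insert _), Set.ncard_insert_of_notMem hfxA hAfin,
        hA]
    · rintro y (rfl | rfl | hy)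
      · exact Or.inr (Or.inl rfl)
      · exact Or.inl (hf _)
      · exact Or.inr (Or.inr (hAf hy))

theorem exists_set_mem_iff_apply_notMem (hf : Involutive f) :
    ∃ T : Set α, ∀ x, f x ≠ x → (x ∈ T ↔ f x ∉ T) := by
  let _ : LinearOrder α := WellOrderingRel.isWellOrder.linearOrder
  refine ⟨{x | x < f x}, fun x hx => ?_⟩
  simp only [Set.mem_ofPred_eq, hf x, not_lt]
  exact (Ne.symm hx).le_iff_lt.symm

end Function.Involutive

theorem eq_one_of_inv_eq_self_of_odd_card {Q : Type*} [Group Q] (hQ : Odd (Nat.card Q)) {q : Q}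
    (hq : q⁻¹ = q) : q = 1 := by
  refine (Nat.Coprime.pow_left_bijective (n := 2) hQ.coprime_two_right).injective ?_
  rw [one_pow, sq]
  nth_rewrite 1 [← hq]
  exact inv_mul_cancel q

namespace Subgroup

variable {G : Type*} [Group G]

theorem exists_inv_eq_subset_ncard_eq (H : Subgroup G) [Finite H] {κ : ℕ}
    (hκ : κ ≤ Nat.card H - 1) (hgcd : Nat.gcd 2 (Nat.card H - 1) ∣ κ) :
    ∃ A ⊆ (H : Set G), 1 ∉ A ∧ A⁻¹ = A ∧ A.ncard = κ := by
  have hS : ((H : Set G) \ {1}).ncard = Nat.card H - 1 := by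
    rw [Set.ncard_sdiff_singleton_of_mem H.one_mem, ← Nat.card_coe_set_eq]
    rfl
  have hpar : Even κ ∨ ∃ x ∈ (H : Set G) \ {1}, x⁻¹ = x := by
    rcases Nat.even_or_odd (Nat.card H) with heven | hodd
    · obtain ⟨g, hg⟩ := exists_prime_orderOf_dvd_card' (G := H) 2 heven.two_dvd
      have hg1 : g ≠ 1 := fun h => by simp [h] at hg
      refine Or.inr ⟨g, ⟨g.2, by simpa using hg1⟩, ?_⟩
      rw [← coe_inv, inv_eq_of_mul_eq_one_right (by rw [← sq, ← hg, pow_orderOf_eq_one])]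
    · have h2 : 2 ∣ Nat.card H - 1 := (Nat.Odd.sub_odd hodd odd_one).two_dvd
      exact Or.inl (even_iff_two_dvd.2 ((Nat.gcd_eq_left h2) ▸ hgcd))
  obtain ⟨A, hAS, hA, hAinv⟩ :=
    inv_involutive.exists_mapsTo_subset_ncard_eq (S := (H : Set G) \ {1})
    (fun x hx => ⟨H.inv_mem hx.1, by simpa using hx.2⟩) (hS ▸ hκ) hpar
  refine ⟨A, hAS.trans Set.sdiff_subset, fun h => (hAS h).2 rfl, ?_, hA⟩
  exact Set.Subset.antisymm (fun x hx => inv_inv x ▸ hAinv hx) (fun x hx => hAinv hx)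

end Subgroup

namespace QuotientGroup

variable {G : Type*} [Group G] {H : Subgroup G}

theorem mk_eq_of_mem_smul_set {C : Set G} (hC : C ⊆ H) {g x : G} (hx : x ∈ g • C) :
    (x : G ⧸ H) = g := by
  obtain ⟨c, hc, rfl⟩ := Set.mem_smul_set.1 hx
  rw [eq_comm, QuotientGroup.eq, smul_eq_mul, inv_mul_cancel_left]
  exact hC hc

variable [H.Normal]

-- `{x | x ∈ P x}` is the union of the pieces `P q ⊆ q`.
theorem ncard_neighbours_in_subgroup (P : G ⧸ H → Set G) (hP : ∀ q, ∀ x ∈ P q, (x : G ⧸ H) = q)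
    (g : G) : {s ∈ (H : Set G) | g⁻¹ * s ∈ {x : G | x ∈ P x}}.ncard = (P (g : G ⧸ H)⁻¹).ncard := by
  suffices {s ∈ (H : Set G) | g⁻¹ * s ∈ {x : G | x ∈ P x}} = g • P (g : G ⧸ H)⁻¹ by
    rw [this, Set.ncard_smul_set]
  ext s
  simp only [Set.mem_smul_set_iff_inv_smul_mem, smul_eq_mul, Set.mem_ofPred_eq, SetLike.mem_coe]
  constructor
  · rintro ⟨hs, hx⟩
    rwa [mk_mul, mk_inv, (eq_one_iff s).2 hs, mul_one] at hx
  · intro hx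
    have hmk := hP _ _ hx
    refine ⟨?_, by rwa [hmk]⟩
    rwa [mk_mul, mk_inv, mul_eq_left, eq_one_iff] at hmk

theorem isRegularSetOfGroup_of_cosetwise (P : G ⧸ H → Set G)
    (hP : ∀ q, ∀ x ∈ P q, (x : G ⧸ H) = q) (hP_inv : ∀ q, (P q)⁻¹ = P q⁻¹) (hP_one : 1 ∉ P 1)
    {τ : ℕ} (hτ : ∀ q ≠ 1, (P q).ncard = τ) :
    IsRegularSetOfGroup (H : Set G) (P 1).ncard τ := by
  refine ⟨{x : G | x ∈ P x}, ⟨hP_one, ?_⟩, fun r hr => ?_, fun g hg => ?_⟩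
  · ext x
    simp [Set.mem_inv, ← hP_inv]
  · rw [ncard_neighbours_in_subgroup P hP, (eq_one_iff r).2 hr, inv_one]
  · rw [ncard_neighbours_in_subgroup P hP, hτ]
    rwa [ne_eq, inv_eq_one, eq_one_iff]

theorem isRegularSetOfGroup_of_odd_index (hodd : Odd H.index) {A : Set G}
    (hAH : A ⊆ H) (hA1 : 1 ∉ A) (hA : A⁻¹ = A) {τ : ℕ} (hτ : τ ≤ Nat.card H) :
    IsRegularSetOfGroup (H : Set G) A.ncard τ := by
  classical
  obtain ⟨C, hCH, hC⟩ := Set.exists_subset_card_eq (s := (H : Set G)) (n := τ) hτ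
  -- By odd index no nontrivial coset is its own inverse, so `T` picks one coset out of each pair
  -- `{q, q⁻¹}`.
  have hfix (q : G ⧸ H) (hq : q ≠ 1) : q⁻¹ ≠ q :=
    mt (eq_one_of_inv_eq_self_of_odd_card (H.index_eq_card ▸ hodd)) hq
  obtain ⟨T, hT⟩ := inv_involutive.exists_set_mem_iff_apply_notMem (α := G ⧸ H)
  let P (q : G ⧸ H) : Set G :=
    if q = 1 then A else if q ∈ T then q.out • C else (q⁻¹.out • C)⁻¹
  have hP1 : P 1 = A := if_pos rfl
  have hP_of_mem {q} (hq : q ≠ 1) (hqT : q ∈ T) : P q = q.out • C := by simp [P, hq, hqT]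
  have hP_of_notMem {q} (hq : q ≠ 1) (hqT : q ∉ T) : P q = (q⁻¹.out • C)⁻¹ := by
    simp [P, hq, hqT]
  refine hP1 ▸ isRegularSetOfGroup_of_cosetwise P (fun q x hx => ?_) (fun q => ?_) (hP1 ▸ hA1)
    (fun q hq => ?_)
  · by_cases hq : q = 1
    · subst hq
      exact (eq_one_iff x).2 (hAH (hP1 ▸ hx))
    by_cases hqT : q ∈ T
    · rw [hP_of_mem hq hqT] at hx
      exact (mk_eq_of_mem_smul_set hCH hx).trans (out_eq' q)
    · rw [hP_of_notMem hq hqT] at hx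
      rw [← inv_inv (x : G ⧸ H), ← mk_inv, mk_eq_of_mem_smul_set hCH hx, out_eq', inv_inv]
  · by_cases hq : q = 1
    · subst hq
      rw [inv_one, hP1, hA]
    have hq' : q⁻¹ ≠ 1 := inv_ne_one.2 hq
    by_cases hqT : q ∈ T
    · rw [hP_of_mem hq hqT, hP_of_notMem hq' ((hT q (hfix q hq)).1 hqT), inv_inv]
    · rw [hP_of_notMem hq hqT, inv_inv, hP_of_mem hq' (not_not.1 (mt (hT q (hfix q hq)).2 hqT))]
  · by_cases hqT : q ∈ T
    · rw [hP_of_mem hq hqT, Set.ncard_smul_set, hC]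
    · rw [hP_of_notMem hq hqT, Set.ncard_inv, Set.ncard_smul_set, hC]

end QuotientGroup

theorem statement_3_general {G : Type*} [Group G] [Fintype G] (H : Subgroup G) [H.Normal]
    (hodd : Odd H.index) (κ τ : ℤ)
    (hκ0 : 0 ≤ κ) (hκ1 : κ ≤ (Nat.card H : ℤ) - 1)
    (hτ0 : 1 ≤ τ) (hτ1 : τ ≤ (Nat.card H : ℤ))
    (hgcd : ((Nat.gcd 2 (Nat.card H - 1) : ℕ) : ℤ) ∣ κ) :
    IsRegularSetOfGroup (H : Set G) κ τ := by
  lift κ to ℕ using hκ0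
  lift τ to ℕ using by omega
  have hH_pos : 0 < Nat.card H := Nat.card_pos
  obtain ⟨A, hAH, hA1, hA, rfl⟩ := H.exists_inv_eq_subset_ncard_eq (κ := κ) (by omega)
    (by exact_mod_cast hgcd)
  exact QuotientGroup.isRegularSetOfGroup_of_odd_index hodd hAH hA1 hA (by exact_mod_cast hτ1)

theorem statement_3 {G : Type*} [Group G] [Fintype G] (H : Subgroup G) [H.Normal]
    (hH : H ≠ ⊥) (hodd : Odd H.index) (κ τ : ℤ)
    (hκ0 : 0 ≤ κ) (hκ1 : κ ≤ (Nat.card H : ℤ) - 1)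
    (hτ0 : 1 ≤ τ) (hτ1 : τ ≤ (Nat.card H : ℤ))
    (hgcd : ((Nat.gcd 2 (Nat.card H - 1) : ℕ) : ℤ) ∣ κ) :
    IsRegularSetOfGroup (H : Set G) κ τ :=
  statement_3_general H hodd κ τ hκ0 hκ1 hτ0 hτ1 hgcd
end

section
/- Let G be a finite group, H a non-trivial normal subgroup of G, and τ an integer with 1 ≤ τ ≤ |H|. If τ is even, then H is a (0,τ)-regular set of G. -/
open Pointwise

/-!
Choose a connection set `X` disjoint from `H` meeting every non-trivial coset of `H` in exactly
`τ` elements; then every `g ∉ H` has exactly `τ` neighbours in `H` (they are `g` times the elements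
of `X ∩ g⁻¹H`) and `H` has no inner edges. Normality makes inversion permute the cosets, so `X`
can be made inverse-closed: over a pair of mutually inverse cosets take any `τ` elements of one and
their inverses in the other, and in a self-inverse coset take an inverse-closed subset of size `τ`,
which exists because `τ` is even (pair up orbits of inversion, using fixed points two at a time).
-/

open Finset

section Involution

variable {α : Type*} [DecidableEq α] {f : α → α}

theorem Finset.exists_invariant_subset_card_eq_two (hf : Function.Involutive f) {T : Finset α}
    (hT : ∀ x ∈ T, f x ∈ T) (hcard : 2 ≤ #T) :
    ∃ P ⊆ T, (∀ x ∈ P, f x ∈ P) ∧ #P = 2 := by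
  have orbit_of_ne : ∀ x ∈ T, f x ≠ x → ∃ P ⊆ T, (∀ x ∈ P, f x ∈ P) ∧ #P = 2 := fun x hx hfx =>
    ⟨{x, f x}, by simp [insert_subset_iff, hx, hT x hx], by simp [hf x], card_pair hfx.symm⟩
  obtain ⟨x, hx⟩ := card_pos.mp (by omega : 0 < #T)
  by_cases hfx : f x = x
  · obtain ⟨y, hy, hyx⟩ := exists_mem_ne (by omega : 1 < #T) x
    by_cases hfy : f y = y
    · exact ⟨{x, y}, by simp [insert_subset_iff, hx, hy], by simp [hfx, hfy], card_pair hyx.symm⟩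
    · exact orbit_of_ne y hy hfy
  · exact orbit_of_ne x hx hfx

theorem Finset.exists_invariant_subset_card_eq_two_mul (hf : Function.Involutive f) (m : ℕ)
    {T : Finset α} (hT : ∀ x ∈ T, f x ∈ T) (hcard : 2 * m ≤ #T) :
    ∃ U ⊆ T, (∀ x ∈ U, f x ∈ U) ∧ #U = 2 * m := by
  induction m generalizing T with
  | zero => exact ⟨∅, by simp⟩
  | succ m ih =>
    obtain ⟨P, hPT, hPf, hP⟩ := exists_invariant_subset_card_eq_two hf hT (by omega)
    have hTP : ∀ x ∈ T \ P, f x ∈ T \ P := fun x hx => by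
      rw [mem_sdiff] at hx ⊢
      exact ⟨hT x hx.1, fun h => hx.2 (hf x ▸ hPf _ h)⟩
    obtain ⟨U, hUT, hUf, hU⟩ := ih hTP (by rw [card_sdiff_of_subset hPT]; omega)
    have hUP : Disjoint U P := disjoint_left.mpr fun x hx => (mem_sdiff.mp (hUT hx)).2
    refine ⟨U ∪ P, union_subset (hUT.trans sdiff_subset) hPT, ?_, ?_⟩
    · simp only [mem_union]
      rintro x (hx | hx)
      exacts [Or.inl (hUf x hx), Or.inr (hPf x hx)]
    · rw [card_union_of_disjoint hUP, hU, hP]; ring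

end Involution

theorem exists_invariant_finset_card_fiber_eq {α β : Type*} [Fintype α] [DecidableEq α]
    [LinearOrder β] {f : α → α} (hf : Function.Involutive f) {σ : β → β}
    (hσ : Function.Involutive σ) {π : α → β} (hπ : ∀ x, π (f x) = σ (π x)) (n : β → ℕ)
    (hnσ : ∀ b, n (σ b) = n b) (hn_even : ∀ b, σ b = b → Even (n b))
    (hn_le : ∀ b, n b ≤ #{x | π x = b}) :
    ∃ X : Finset α, (∀ x ∈ X, f x ∈ X) ∧ ∀ b, #{x ∈ X | π x = b} = n b := by
  have hU : ∀ b, ∃ U ⊆ ({x | π x = b} : Finset α), #U = n b ∧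
      (σ b = b → ∀ x ∈ U, f x ∈ U) := by
    intro b
    by_cases hb : σ b = b
    · obtain ⟨m, hm⟩ := hn_even b hb
      obtain ⟨U, hUb, hUf, hU⟩ := exists_invariant_subset_card_eq_two_mul hf m
        (T := {x | π x = b}) (by simp +contextual [hπ, hb]) (by have := hn_le b; omega)
      exact ⟨U, hUb, by omega, fun _ => hUf⟩
    · obtain ⟨U, hUb, hU⟩ := exists_subset_card_eq (hn_le b)
      exact ⟨U, hUb, hU, fun h => absurd h hb⟩
  choose U hUfiber hUcard hUf using hU
  -- Over a pair `b ≠ σ b` of fibres, the one lower in the order is chosen freely and the other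
  -- is its image under `f`.
  let S : β → Finset α := fun b => if b ≤ σ b then U b else (U (σ b)).image f
  have hS_fiber : ∀ b, ∀ x ∈ S b, π x = b := by
    intro b x hx
    simp only [S] at hx
    split_ifs at hx
    · simpa using hUfiber b hx
    · obtain ⟨y, hy, rfl⟩ := mem_image.mp hx
      rw [hπ, (mem_filter.mp (hUfiber _ hy)).2, hσ]
  have hS_card : ∀ b, #(S b) = n b := by
    intro b
    simp only [S]
    split_ifs
    · exact hUcard b
    · rw [card_image_of_injective _ hf.injective, hUcard, hnσ]
  have hS_inv : ∀ b, ∀ x ∈ S b, f x ∈ S (σ b) := by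
    intro b x hx
    simp only [S, hσ b] at hx ⊢
    rcases lt_trichotomy b (σ b) with hlt | heq | hgt
    · rw [if_pos hlt.le] at hx
      rw [if_neg (not_le.mpr hlt)]
      exact mem_image_of_mem f hx
    · rw [if_pos heq.le] at hx
      rw [← heq, if_pos le_rfl]
      exact hUf b heq.symm x hx
    · rw [if_neg (not_le.mpr hgt)] at hx
      rw [if_pos hgt.le]
      obtain ⟨y, hy, rfl⟩ := mem_image.mp hx
      rwa [hf]
  refine ⟨({x | x ∈ S (π x)} : Finset α), fun x hx => ?_, fun b => ?_⟩
  · rw [mem_filter] at hx ⊢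
    exact ⟨mem_univ _, hπ x ▸ hS_inv _ x hx.2⟩
  · rw [← hS_card b]
    congr 1
    ext x
    simp only [mem_filter, mem_univ, true_and]
    exact ⟨fun ⟨hx, hxb⟩ => hxb ▸ hx, fun hx => ⟨(hS_fiber b x hx).symm ▸ hx, hS_fiber b x hx⟩⟩

theorem QuotientGroup.card_filter_mk_eq {G : Type*} [Group G] [Fintype G] (H : Subgroup G)
    [DecidableEq (G ⧸ H)] (q : G ⧸ H) : #{x : G | (x : G ⧸ H) = q} = Nat.card H := by
  have := QuotientGroup.card_preimage_mk H {q}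
  rw [Nat.card_unique (α := ({q} : Set _)), mul_one] at this
  rw [← Fintype.card_subtype, ← Nat.card_eq_fintype_card, ← this]
  rfl

theorem isRegularSetOfCayley_subgroup {G : Type*} [Group G] (H : Subgroup G) (X : Set G) (τ : ℕ)
    (hXH : ∀ x ∈ X, x ∉ H) (hX : ∀ g : G, g ∉ H → {x ∈ X | (x : G ⧸ H) = g}.ncard = τ) :
    IsRegularSetOfCayley X H 0 τ := by
  refine ⟨fun r hr => ?_, fun g hg => ?_⟩
  · have : {s ∈ (H : Set G) | r⁻¹ * s ∈ X} = ∅ :=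
      Set.eq_empty_of_forall_notMem fun s ⟨hs, hsX⟩ => hXH _ hsX (mul_mem (inv_mem hr) hs)
    rw [this, Set.ncard_empty, Nat.cast_zero]
  · have hnbhd : (g⁻¹ * ·) '' {s ∈ (H : Set G) | g⁻¹ * s ∈ X} = {x ∈ X | (x : G ⧸ H) = g⁻¹} := by
      ext x
      constructor
      · rintro ⟨s, ⟨hs, hsX⟩, rfl⟩
        exact ⟨hsX, (QuotientGroup.eq.mpr (by simpa using hs)).symm⟩
      · rintro ⟨hxX, hx⟩
        have hgx : g * x ∈ H := by simpa using QuotientGroup.eq.mp hx.symm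
        exact ⟨g * x, ⟨hgx, by simpa using hxX⟩, by simp⟩
    rw [← hX g⁻¹ (inv_mem_iff.not.mpr hg), ← hnbhd,
      Set.ncard_image_of_injective _ (mul_right_injective g⁻¹)]

theorem statement_4_general {G : Type*} [Group G] [Fintype G] (H : Subgroup G) [H.Normal]
    (τ : ℤ)
    (hτ0 : 1 ≤ τ) (hτ1 : τ ≤ (Nat.card H : ℤ)) (hτeven : Even τ) :
    IsRegularSetOfGroup (H : Set G) 0 τ := by
  classical
  lift τ to ℕ using by omega
  let : LinearOrder (G ⧸ H) := IsWellOrder.linearOrder WellOrderingRel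
  obtain ⟨X, hXinv, hXcard⟩ := exists_invariant_finset_card_fiber_eq inv_involutive
    inv_involutive (π := ((↑) : G → G ⧸ H)) (fun _ => QuotientGroup.mk_inv _ _)
    (fun q => if q = 1 then 0 else τ) (by simp)
    (fun q _ => by split_ifs <;> simp_all [Int.even_coe_nat])
    (fun q => by
      split_ifs
      · exact Nat.zero_le _
      · rw [QuotientGroup.card_filter_mk_eq]; omega)
  have hXH : ∀ x ∈ (X : Set G), x ∉ H := fun x hx hxH => by
    have := hXcard 1
    simp only [if_pos, card_eq_zero, filter_eq_empty_iff, QuotientGroup.eq_one_iff] at this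
    exact this hx hxH
  refine ⟨X, ⟨fun h => hXH 1 h H.one_mem, ?_⟩, ?_⟩
  · ext x
    exact ⟨fun hx => inv_inv x ▸ hXinv _ hx, hXinv x⟩
  · refine isRegularSetOfCayley_subgroup H X τ hXH fun g hg => ?_
    have hcard := hXcard g
    rw [if_neg (by rwa [QuotientGroup.eq_one_iff]), ← Set.ncard_coe_finset, coe_filter] at hcard
    exact hcard

theorem statement_4 {G : Type*} [Group G] [Fintype G] (H : Subgroup G) [H.Normal]
    (hH : H ≠ ⊥) (τ : ℤ)
    (hτ0 : 1 ≤ τ) (hτ1 : τ ≤ (Nat.card H : ℤ)) (hτeven : Even τ) :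
    IsRegularSetOfGroup (H : Set G) 0 τ :=
  statement_4_general H τ hτ0 hτ1 hτeven
end

section
/- Let G be a finite group, H a non-trivial normal subgroup of G, and τ an even integer with 1 ≤ τ ≤ |H|. Then there exists an inverse-closed subset X of G such that X ∩ H = ∅ and |X ∩ gH| = τ for every g ∈ G \ H. -/
open Pointwise

/-!
The cosets of `H` are permuted by inversion, `(gH)⁻¹ = g⁻¹H`. Pick `τ` elements in every
non-trivial coset compatibly with this: on a pair of distinct cosets `gH ≠ g⁻¹H` choose any
`τ`-subset of one and take its inverses in the other; a coset with `gH = g⁻¹H` is itself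
inverse-closed, and since `τ` is even an inverse-closed `τ`-subset is obtained by peeling
off pairs `{a, a⁻¹}` with `a ≠ a⁻¹`, or by taking any `τ` elements once all remaining ones are
involutions.
-/

namespace Set

variable {α : Type*} [InvolutiveInv α]

theorem inv_pair (a : α) : ({a, a⁻¹} : Set α)⁻¹ = {a, a⁻¹} := by
  rw [inv_insert, inv_singleton, inv_inv, pair_comm]

theorem inv_sdiff (s t : Set α) : (s \ t)⁻¹ = s⁻¹ \ t⁻¹ :=
  preimage_sdiff _ s t

theorem exists_inv_eq_subset_ncard_eq_two_mul {A : Set α} (hA : A.Finite) (hAinv : A⁻¹ = A)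
    {n : ℕ} (hn : 2 * n ≤ A.ncard) : ∃ B ⊆ A, B⁻¹ = B ∧ B.ncard = 2 * n := by
  induction n generalizing A with
  | zero => exact ⟨∅, empty_subset A, inv_empty, ncard_empty α⟩
  | succ n ih =>
    by_cases h : ∃ a ∈ A, a⁻¹ ≠ a
    · obtain ⟨a, ha, hne⟩ := h
      have hPA : {a, a⁻¹} ⊆ A := pair_subset ha (by rw [← hAinv]; simpa)
      have hP : ({a, a⁻¹} : Set α).ncard = 2 := ncard_pair hne.symm
      obtain ⟨B, hBA, hBinv, hB⟩ := ih (A := A \ {a, a⁻¹}) hA.sdiff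
        (by rw [inv_sdiff, hAinv, inv_pair]) (by rw [ncard_sdiff hPA (hA.subset hPA), hP]; omega)
      refine ⟨B ∪ {a, a⁻¹}, union_subset (hBA.trans sdiff_subset) hPA,
        by rw [union_inv, hBinv, inv_pair], ?_⟩
      rw [ncard_union_eq (disjoint_of_subset_left hBA disjoint_sdiff_left)
        (hA.subset (hBA.trans sdiff_subset)) (hA.subset hPA), hB, hP]
      ring
    · push Not at h
      obtain ⟨B, hBA, hB⟩ := exists_subset_card_eq hn
      refine ⟨B, hBA, ?_, hB⟩
      ext x
      rw [mem_inv]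
      constructor
      · intro hx
        rwa [← h _ (hBA hx), inv_inv] at hx
      · intro hx
        rwa [h x (hBA hx)]

end Set

theorem exists_inv_compatible_subsets {ι α : Type*} [InvolutiveInv ι] [InvolutiveInv α]
    (C : ι → Set α) (hC : ∀ i, (C i)⁻¹ = C i⁻¹) (hfin : ∀ i, (C i).Finite) {n : ℕ}
    (hn : ∀ i, 2 * n ≤ (C i).ncard) :
    ∃ F : ι → Set α, ∀ i, F i ⊆ C i ∧ (F i)⁻¹ = F i⁻¹ ∧ (F i).ncard = 2 * n := by
  have hS : ∀ i, ∃ S ⊆ C i, (i⁻¹ = i → S⁻¹ = S) ∧ S.ncard = 2 * n := by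
    intro i
    by_cases hi : i⁻¹ = i
    · obtain ⟨S, hSC, hSinv, hS⟩ :=
        Set.exists_inv_eq_subset_ncard_eq_two_mul (hfin i) (by rw [hC, hi]) (hn i)
      exact ⟨S, hSC, fun _ => hSinv, hS⟩
    · obtain ⟨S, hSC, hS⟩ := Set.exists_subset_card_eq (hn i)
      exact ⟨S, hSC, fun h => absurd h hi, hS⟩
  choose S hSC hSinv hS using hS
  -- of two distinct mutually inverse indices, the larger one takes the inverses of the other's set
  obtain ⟨_, -⟩ := exists_wellFoundedLT ι
  refine ⟨fun i => if i⁻¹ < i then (S i⁻¹)⁻¹ else S i, fun i => ⟨?_, ?_, ?_⟩⟩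
  · dsimp only
    split_ifs
    · rw [← Set.inv_subset_inv, inv_inv, hC]
      exact hSC i⁻¹
    · exact hSC i
  · rcases lt_trichotomy i⁻¹ i with hlt | heq | hgt
    · simp [hlt, hlt.not_gt]
    · simp [heq, hSinv i heq]
    · simp [hgt, hgt.not_gt]
  · dsimp only
    split_ifs
    · rw [Set.ncard_inv, hS]
    · exact hS i

namespace QuotientGroup

variable {G : Type*} [Group G] (H : Subgroup G)

theorem leftCoset_eq_preimage_mk (g : G) : g • (H : Set G) = mk ⁻¹' {(g : G ⧸ H)} := by
  ext x
  rw [mem_leftCoset_iff, Set.mem_preimage, Set.mem_singleton_iff, eq_comm, QuotientGroup.eq]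
  rfl

theorem ncard_preimage_mk_singleton (q : G ⧸ H) :
    (mk ⁻¹' {q} : Set G).ncard = Nat.card H := by
  rw [← Nat.card_coe_set_eq, card_preimage_mk, Nat.card_unique (α := ({q} : Set _)), mul_one]

theorem inv_preimage_mk_singleton [H.Normal] (q : G ⧸ H) :
    (mk ⁻¹' {q} : Set G)⁻¹ = mk ⁻¹' {q⁻¹} := by
  ext x
  simp [mk_inv, inv_eq_iff_eq_inv]

end QuotientGroup

theorem statement_5_general {G : Type*} [Group G] [Fintype G] (H : Subgroup G) [H.Normal]
    (τ : ℤ)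
    (hτ0 : 1 ≤ τ) (hτ1 : τ ≤ (Nat.card H : ℤ)) (hτeven : Even τ) :
    ∃ X : Set G, X⁻¹ = X ∧ X ∩ (H : Set G) = ∅ ∧
      ∀ g : G, g ∉ (H : Set G) → ((X ∩ (g • (H : Set G))).ncard : ℤ) = τ := by
  obtain ⟨k, rfl⟩ := hτeven
  lift k to ℕ using (by omega)
  obtain ⟨F, hF⟩ := exists_inv_compatible_subsets (fun q : G ⧸ H => QuotientGroup.mk ⁻¹' {q})
    (QuotientGroup.inv_preimage_mk_singleton H) (fun _ => Set.toFinite _) (n := k)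
    (fun q => by rw [QuotientGroup.ncard_preimage_mk_singleton]; omega)
  refine ⟨{x | x ∉ H ∧ x ∈ F x}, ?_, ?_, fun g hg => ?_⟩
  · ext x
    simp [QuotientGroup.mk_inv, ← (hF _).2.1]
  · ext x
    simp +contextual
  · have hcoset : {x | x ∉ H ∧ x ∈ F x} ∩ g • (H : Set G) = F g := by
      ext x
      rw [QuotientGroup.leftCoset_eq_preimage_mk]
      constructor
      · rintro ⟨⟨-, hx⟩, hxg : (x : G ⧸ H) = g⟩
        rwa [← hxg]
      · intro hx
        have hxg : (x : G ⧸ H) = g := (hF g).1 hx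
        refine ⟨⟨fun hxH => hg ?_, hxg ▸ hx⟩, hxg⟩
        rwa [SetLike.mem_coe, ← QuotientGroup.eq_one_iff, ← hxg, QuotientGroup.eq_one_iff]
    rw [hcoset, (hF g).2.2]
    push_cast
    ring

theorem statement_5 {G : Type*} [Group G] [Fintype G] (H : Subgroup G) [H.Normal]
    (hH : H ≠ ⊥) (τ : ℤ)
    (hτ0 : 1 ≤ τ) (hτ1 : τ ≤ (Nat.card H : ℤ)) (hτeven : Even τ) :
    ∃ X : Set G, X⁻¹ = X ∧ X ∩ (H : Set G) = ∅ ∧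
      ∀ g : G, g ∉ (H : Set G) → ((X ∩ (g • (H : Set G))).ncard : ℤ) = τ :=
  statement_5_general H τ hτ0 hτ1 hτeven
end

section
/- Let G be a finite group, H a non-trivial normal subgroup of G, and let κ and τ be integers satisfying 0 ≤ κ ≤ |H| − 1, 1 ≤ τ ≤ |H| and gcd(2, |H| − 1) ∣ κ. Then H is a (κ,τ)-regular set of G if and only if H is a (0,τ)-regular set of G. -/
open Pointwise

/-!
In `Cay(G, X)` the neighbours in `H` of `r ∈ H` form the coset `r (X ∩ H)`, so the inner degree
is `|X ∩ H|`, while a vertex `g ∉ H` only reaches `H` through `X \ H`. Hence the part of the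
connection set inside `H` can be replaced by any inverse-closed `S ⊆ H \ {1}`, turning a
`(κ, τ)`-regular set `H` into an `(|S|, τ)`-regular one. Such an `S` exists for every size
`k ≤ |H| - 1` with `gcd(2, |H| - 1) ∣ k`: `H \ {1}` is a union of pairs `{x, x⁻¹}` and
involutions, and by Cauchy there is an involution when `|H|` is even.
-/

section

variable {G K : Type*} [Group G] [Group K]

namespace IsConnectionSet

lemma empty : IsConnectionSet (∅ : Set G) :=
  ⟨Set.notMem_empty 1, Set.inv_empty⟩

lemma union {X Y : Set G} (hX : IsConnectionSet X) (hY : IsConnectionSet Y) :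
    IsConnectionSet (X ∪ Y) :=
  ⟨fun h => h.elim hX.1 hY.1, by rw [Set.union_inv, hX.2, hY.2]⟩

lemma sdiff_subgroup {X : Set G} (hX : IsConnectionSet X) (H : Subgroup G) :
    IsConnectionSet (X \ H) :=
  ⟨fun h => hX.1 h.1, by rw [Set.sdiff_eq, Set.inter_inv, Set.compl_inv, hX.2, inv_coe_set]⟩

lemma image {S : Set K} (hS : IsConnectionSet S) (f : K →* G) (hf : Function.Injective f) :
    IsConnectionSet (f '' S) := by
  refine ⟨?_, by rw [← Set.image_inv, hS.2]⟩
  rintro ⟨x, hx, hfx⟩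
  rw [← map_one f, hf.eq_iff] at hfx
  exact hS.1 (hfx ▸ hx)

end IsConnectionSet

lemma Set.exists_inv_eq_subset_ncard_eq_two {C : Set K} (hC : C⁻¹ = C) (h : 1 < C.ncard) :
    ∃ T ⊆ C, T⁻¹ = T ∧ T.ncard = 2 := by
  by_cases hinv : ∃ z ∈ C, z⁻¹ ≠ z
  · obtain ⟨z, hz, hz'⟩ := hinv
    have hz_inv : z⁻¹ ∈ C := by rwa [← hC, Set.inv_mem_inv]
    refine ⟨{z, z⁻¹}, Set.pair_subset hz hz_inv, ?_, Set.ncard_pair hz'.symm⟩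
    rw [Set.inv_insert, Set.inv_singleton, inv_inv, Set.pair_comm]
  · push Not at hinv
    obtain ⟨x, y, hx, hy, hxy⟩ := (Set.one_lt_ncard_iff (Set.finite_of_ncard_pos (by omega))).1 h
    refine ⟨{x, y}, Set.pair_subset hx hy, ?_, Set.ncard_pair hxy⟩
    rw [Set.inv_insert, Set.inv_singleton, hinv x hx, hinv y hy]

lemma IsConnectionSet.exists_ncard_eq_add_two [Finite K] {S : Set K} (hS : IsConnectionSet S)
    (h : S.ncard + 2 ≤ Nat.card K - 1) : ∃ T : Set K, IsConnectionSet T ∧ T.ncard = S.ncard + 2 := by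
  set C := (insert 1 S)ᶜ
  have hC : C⁻¹ = C := by rw [Set.compl_inv, Set.inv_insert, inv_one, hS.2]
  have hCcard : C.ncard = Nat.card K - (S.ncard + 1) := by
    rw [Set.ncard_compl, Set.ncard_insert_of_notMem hS.1]
  obtain ⟨T, hTC, hTinv, hTcard⟩ := Set.exists_inv_eq_subset_ncard_eq_two hC (by omega)
  have hTS : Disjoint S T := Set.disjoint_left.2 fun x hxS hxT =>
    hTC hxT (Set.mem_insert_of_mem 1 hxS)
  refine ⟨S ∪ T, hS.union ⟨fun h1 => hTC h1 (Set.mem_insert 1 S), hTinv⟩, ?_⟩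
  rw [Set.ncard_union_eq hTS, hTcard]

lemma IsConnectionSet.exists_ncard_eq_add_two_mul [Finite K] {S : Set K}
    (hS : IsConnectionSet S) (m : ℕ) (h : S.ncard + 2 * m ≤ Nat.card K - 1) :
    ∃ T : Set K, IsConnectionSet T ∧ T.ncard = S.ncard + 2 * m := by
  induction m with
  | zero => exact ⟨S, hS, rfl⟩
  | succ m ih =>
    obtain ⟨T, hT, hTcard⟩ := ih (by omega)
    obtain ⟨U, hU, hUcard⟩ := hT.exists_ncard_eq_add_two (by omega)
    exact ⟨U, hU, by omega⟩

lemma exists_isConnectionSet_ncard_eq_one [Finite K] (h : Even (Nat.card K)) :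
    ∃ S : Set K, IsConnectionSet S ∧ S.ncard = 1 := by
  obtain ⟨x, hx⟩ := exists_prime_orderOf_dvd_card' 2 (even_iff_two_dvd.1 h)
  refine ⟨{x}, ⟨fun h1 => ?_, ?_⟩, Set.ncard_singleton x⟩
  · rw [← Set.mem_singleton_iff.1 h1, orderOf_one] at hx
    omega
  · rw [Set.inv_singleton, inv_eq_of_mul_eq_one_left (by rw [← sq, ← hx, pow_orderOf_eq_one])]

theorem exists_isConnectionSet_ncard_eq [Finite K] (k : ℕ) (hk : k ≤ Nat.card K - 1)
    (hpar : Nat.gcd 2 (Nat.card K - 1) ∣ k) : ∃ S : Set K, IsConnectionSet S ∧ S.ncard = k := by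
  obtain ⟨m, rfl | rfl⟩ := Nat.even_or_odd' k
  · simpa using IsConnectionSet.empty.exists_ncard_eq_add_two_mul m (by simpa using hk)
  · have hodd : ¬ 2 ∣ Nat.card K - 1 := fun h => by rw [Nat.gcd_eq_left h] at hpar; omega
    obtain ⟨S, hS, hScard⟩ := exists_isConnectionSet_ncard_eq_one (K := K) (by
      rw [Nat.even_iff]; omega)
    simpa [hScard, add_comm] using hS.exists_ncard_eq_add_two_mul m (by omega)

namespace Subgroup

variable (H : Subgroup G) {X Y : Set G}

lemma ncard_setOf_mem_inv_mul_mem_of_mem {r : G} (hr : r ∈ H) :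
    {s ∈ (H : Set G) | r⁻¹ * s ∈ X}.ncard = (X ∩ H).ncard := by
  have : {s ∈ (H : Set G) | r⁻¹ * s ∈ X} = (r * ·) '' (X ∩ H) := by
    ext s
    simp only [Set.mem_ofPred_eq, Set.mem_image, Set.mem_inter_iff, SetLike.mem_coe]
    refine ⟨fun ⟨hs, hsX⟩ => ⟨r⁻¹ * s, ⟨hsX, H.mul_mem (H.inv_mem hr) hs⟩, mul_inv_cancel_left r s⟩,
      ?_⟩
    rintro ⟨x, ⟨hxX, hxH⟩, rfl⟩
    exact ⟨H.mul_mem hr hxH, by rwa [inv_mul_cancel_left]⟩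
  rw [this, Set.ncard_image_of_injective _ (mul_right_injective r)]

lemma setOf_mem_inv_mul_mem_congr_of_notMem {g : G} (hg : g ∉ H) (hXY : X \ H = Y \ H) :
    {s ∈ (H : Set G) | g⁻¹ * s ∈ X} = {s ∈ (H : Set G) | g⁻¹ * s ∈ Y} := by
  ext s
  simp only [Set.mem_ofPred_eq, and_congr_right_iff]
  intro hs
  have hgs : g⁻¹ * s ∉ H := fun h => hg (by simpa using H.mul_mem hs (H.inv_mem h))
  have hsdiff : ∀ Z : Set G, g⁻¹ * s ∈ Z ↔ g⁻¹ * s ∈ Z \ H := fun Z => (and_iff_left hgs).symm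
  rw [hsdiff X, hsdiff Y, hXY]

lemma isRegularSetOfCayley_of_sdiff_eq {κ τ : ℤ} (h : IsRegularSetOfCayley X H κ τ)
    (hXY : X \ H = Y \ H) : IsRegularSetOfCayley Y H (Y ∩ H).ncard τ :=
  ⟨fun _ hr => by rw [H.ncard_setOf_mem_inv_mul_mem_of_mem hr],
    fun g hg => by rw [← H.setOf_mem_inv_mul_mem_congr_of_notMem hg hXY]; exact h.2 g hg⟩

lemma isRegularSetOfGroup_ncard_of_subset {κ τ : ℤ} (h : IsRegularSetOfGroup (H : Set G) κ τ)
    {S : Set G} (hS : IsConnectionSet S) (hSH : S ⊆ H) :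
    IsRegularSetOfGroup (H : Set G) S.ncard τ := by
  obtain ⟨X, hX, hreg⟩ := h
  have hinter : (X \ H ∪ S) ∩ H = S := by
    rw [Set.union_inter_distrib_right, Set.sdiff_inter_self, Set.empty_union,
      Set.inter_eq_left.2 hSH]
  have hdiff : X \ H = (X \ H ∪ S) \ H := by
    rw [Set.union_sdiff_distrib, sdiff_idem, Set.sdiff_eq_empty.2 hSH, Set.union_empty]
  have hreg' := H.isRegularSetOfCayley_of_sdiff_eq hreg hdiff
  rw [hinter] at hreg'
  exact ⟨X \ H ∪ S, (hX.sdiff_subgroup H).union hS, hreg'⟩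

end Subgroup

end

theorem statement_7_general {G : Type*} [Group G] (H : Subgroup G) (κ τ : ℤ)
    (hκ0 : 0 ≤ κ) (hκ1 : κ ≤ (Nat.card H : ℤ) - 1)
    (hgcd : ((Nat.gcd 2 (Nat.card H - 1) : ℕ) : ℤ) ∣ κ) :
    IsRegularSetOfGroup (H : Set G) κ τ ↔ IsRegularSetOfGroup (H : Set G) 0 τ := by
  lift κ to ℕ using hκ0
  have : Finite H := Nat.finite_of_card_ne_zero (by omega)
  constructor
  · intro h
    simpa using H.isRegularSetOfGroup_ncard_of_subset h IsConnectionSet.empty (Set.empty_subset _)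
  intro h
  obtain ⟨S, hS, hScard⟩ := exists_isConnectionSet_ncard_eq (K := H) κ (by omega)
    (Int.natCast_dvd_natCast.1 hgcd)
  have hSH : H.subtype '' S ⊆ H := by rintro _ ⟨x, -, rfl⟩; exact x.2
  have hcard : (H.subtype '' S).ncard = κ := by
    rw [Set.ncard_image_of_injective S H.subtype_injective, hScard]
  rw [← hcard]
  exact H.isRegularSetOfGroup_ncard_of_subset h (hS.image H.subtype H.subtype_injective) hSH

theorem statement_7 {G : Type*} [Group G] [Fintype G] (H : Subgroup G) [H.Normal]
    (hH : H ≠ ⊥) (κ τ : ℤ)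
    (hκ0 : 0 ≤ κ) (hκ1 : κ ≤ (Nat.card H : ℤ) - 1)
    (hτ0 : 1 ≤ τ) (hτ1 : τ ≤ (Nat.card H : ℤ))
    (hgcd : ((Nat.gcd 2 (Nat.card H - 1) : ℕ) : ℤ) ∣ κ) :
    IsRegularSetOfGroup (H : Set G) κ τ ↔ IsRegularSetOfGroup (H : Set G) 0 τ :=
  statement_7_general H κ τ hκ0 hκ1 hgcd
end

section
/- Let G be a finite group, H a subgroup of G, and X an inverse-closed subset of G \ {1}. If H is a (κ,τ)-regular set of the Cayley graph Cay(G,X), then H is a (0,τ)-regular set of the Cayley graph Cay(G, X \ H). -/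
open Pointwise

/-! Since `g⁻¹ * s ∈ H ↔ g ∈ H` for `s ∈ H`, removing `H` from the connection set deletes every
edge from a vertex of `H` into `H`, and no edge from a vertex outside `H` into `H`. -/

section

variable {G : Type*} [Group G] (H : Subgroup G) (X : Set G)

lemma inv_mul_mem_subgroup_iff {g s : G} (hs : s ∈ H) : g⁻¹ * s ∈ H ↔ g ∈ H := by
  rw [H.mul_mem_cancel_right hs, inv_mem_iff]

lemma setOf_mem_inv_mul_mem_diff_eq_empty {r : G} (hr : r ∈ H) :
    {s ∈ (H : Set G) | r⁻¹ * s ∈ X \ (H : Set G)} = ∅ := by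
  ext s
  simp only [Set.mem_ofPred_eq, Set.mem_sdiff, SetLike.mem_coe, Set.mem_empty_iff_false,
    iff_false, not_and, not_not]
  exact fun hs _ => (inv_mul_mem_subgroup_iff H hs).2 hr

lemma setOf_mem_inv_mul_mem_diff_eq {g : G} (hg : g ∉ H) :
    {s ∈ (H : Set G) | g⁻¹ * s ∈ X \ (H : Set G)} = {s ∈ (H : Set G) | g⁻¹ * s ∈ X} := by
  ext s
  simp only [Set.mem_ofPred_eq, Set.mem_sdiff, SetLike.mem_coe]
  constructor
  · exact fun ⟨hs, hx, _⟩ => ⟨hs, hx⟩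
  · exact fun ⟨hs, hx⟩ => ⟨hs, hx, mt (inv_mul_mem_subgroup_iff H hs).1 hg⟩

end

theorem statement_8_general {G : Type*} [Group G] (H : Subgroup G)
    (X : Set G) (κ τ : ℕ)
    (h : IsRegularSetOfCayley X (H : Set G) κ τ) :
    IsRegularSetOfCayley (X \ (H : Set G)) (H : Set G) 0 τ := by
  refine ⟨fun r hr => ?_, fun g hg => ?_⟩
  · rw [setOf_mem_inv_mul_mem_diff_eq_empty H X hr, Set.ncard_empty, Nat.cast_zero]
  · rw [setOf_mem_inv_mul_mem_diff_eq H X hg]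
    exact h.2 g hg

theorem statement_8 {G : Type*} [Group G] [Fintype G] (H : Subgroup G)
    (X : Set G) (hX : IsConnectionSet X) (κ τ : ℕ)
    (h : IsRegularSetOfCayley X (H : Set G) κ τ) :
    IsRegularSetOfCayley (X \ (H : Set G)) (H : Set G) 0 τ :=
  statement_8_general H X κ τ h
end

section
/- Let G be a finite group, H a non-trivial subgroup of G, Y an inverse-closed subset of G \ {1}, and κ an integer satisfying 0 ≤ κ ≤ |H| − 1 and gcd(2, |H| − 1) ∣ κ. If H is a (0,τ)-regular set of the Cayley graph Cay(G,Y), then there exists an inverse-closed subset Z of H \ {1} with |Z| = κ such that H is a (κ,τ)-regular set of the Cayley graph Cay(G, Y ∪ Z). -/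
open Pointwise

/-!
Since `H` is a `(0,τ)`-regular set, `Y` misses `H`; hence for any inverse-closed `Z ⊆ H \ {1}`
the `H`-neighbours of `r ∈ H` in `Cay(G, Y ∪ Z)` are exactly `r Z`, while a vertex `g ∉ H` gains
no new neighbours in `H`. It remains to find such a `Z` of size `κ`: the inversion map splits
`H \ {1}` into pairs `{x, x⁻¹}` and involutions, and when `κ` is odd, the gcd condition forces
`|H|` to be even, so by Cauchy `H` contains an involution.
-/

namespace Finset

variable {α : Type*} [DecidableEq α] [InvolutiveInv α]

lemma inv_union (s t : Finset α) : (s ∪ t)⁻¹ = s⁻¹ ∪ t⁻¹ := coe_injective <| by simp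

lemma inv_sdiff (s t : Finset α) : (s \ t)⁻¹ = s⁻¹ \ t⁻¹ := by ext; simp

lemma inv_pair (a : α) : ({a, a⁻¹} : Finset α)⁻¹ = {a, a⁻¹} := by
  rw [inv_insert, inv_singleton, inv_inv, pair_comm]

theorem exists_subset_inv_eq_self_card_eq {n : ℕ} {S : Finset α} (hS : S⁻¹ = S) (hn : n ≤ #S)
    (hodd : Odd n → ∃ t ∈ S, t⁻¹ = t) : ∃ Z ⊆ S, Z⁻¹ = Z ∧ #Z = n := by
  induction n using Nat.strong_induction_on generalizing S with
  | _ n ih =>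
  rcases n.eq_zero_or_pos with rfl | hpos
  · exact ⟨∅, empty_subset S, inv_empty, card_empty⟩
  -- Split off a nonempty inverse-closed `P ⊆ S` leaving an even remainder, and recurse on `S \ P`.
  have split_off : ∀ P ⊆ S, P⁻¹ = P → 0 < #P → #P ≤ n → Even (n - #P) →
      ∃ Z ⊆ S, Z⁻¹ = Z ∧ #Z = n := by
    intro P hPS hP hP0 hPn heven
    obtain ⟨Z, hZS, hZ, hZcard⟩ := ih (n - #P) (by omega) (S := S \ P)
      (by rw [inv_sdiff, hS, hP]) (by rw [card_sdiff_of_subset hPS]; omega)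
      (fun h => absurd heven (Nat.not_even_iff_odd.mpr h))
    refine ⟨P ∪ Z, union_subset hPS (hZS.trans sdiff_subset), by rw [inv_union, hP, hZ], ?_⟩
    rw [card_union_of_disjoint (disjoint_of_subset_right hZS disjoint_sdiff), hZcard]
    omega
  rcases n.even_or_odd with heven | hodd_n
  · by_cases hfix : ∀ x ∈ S, x⁻¹ = x
    · obtain ⟨Z, hZS, hZ⟩ := exists_subset_card_eq hn
      exact ⟨Z, hZS, (image_congr fun x hx => hfix x (hZS hx)).trans image_id, hZ⟩
    push Not at hfix
    obtain ⟨x, hxS, hx⟩ := hfix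
    have hcard : #({x, x⁻¹} : Finset α) = 2 := card_pair hx.symm
    refine split_off {x, x⁻¹} (insert_subset hxS (singleton_subset_iff.mpr ?_)) (inv_pair x)
      (by omega) ?_ ?_
    · exact hS ▸ inv_mem_inv hxS
    · rcases heven with ⟨k, hk⟩; omega
    · rw [hcard]; exact heven.tsub even_two
  · obtain ⟨t, htS, ht⟩ := hodd hodd_n
    exact split_off {t} (singleton_subset_iff.mpr htS) (by rw [inv_singleton, ht])
      (by simp) (by simp; omega) (by simpa using Nat.Odd.sub_odd hodd_n odd_one)

end Finset

section Cayley

variable {G : Type*} [Group G]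

lemma exists_ne_one_inv_eq_self_of_even_card [Finite G] (h : Even (Nat.card G)) :
    ∃ t : G, t ≠ 1 ∧ t⁻¹ = t := by
  obtain ⟨t, ht⟩ := exists_prime_orderOf_dvd_card' 2 (even_iff_two_dvd.mp h)
  exact ⟨t, fun h1 => by simp [h1] at ht, inv_eq_self_of_orderOf_eq_two ht⟩

variable {Y Z : Set G} {H : Subgroup G} {τ : ℤ}

lemma IsRegularSetOfCayley.disjoint_of_zero [Finite G] (h : IsRegularSetOfCayley Y H 0 τ) :
    Disjoint Y H := by
  refine Set.disjoint_left.mpr fun y hyY hyH => ?_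
  have hne : {s ∈ (H : Set G) | (1 : G)⁻¹ * s ∈ Y}.Nonempty := ⟨y, hyH, by simpa using hyY⟩
  have := (Set.ncard_pos (Set.toFinite _)).mpr hne
  have := h.1 1 H.one_mem
  omega

lemma IsRegularSetOfCayley.union_of_subset [Finite G] (h : IsRegularSetOfCayley Y H 0 τ)
    (hZ : Z ⊆ H) : IsRegularSetOfCayley (Y ∪ Z) H Z.ncard τ := by
  constructor
  · intro r hr
    have hrY : ∀ s ∈ H, r⁻¹ * s ∉ Y := fun s hs hY =>
      h.disjoint_of_zero.notMem_of_mem_left hY (H.mul_mem (H.inv_mem hr) hs)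
    have hnbrs : {s ∈ (H : Set G) | r⁻¹ * s ∈ Y ∪ Z} = (r * ·) '' Z := by
      rw [Set.image_mul_left]
      ext s
      refine ⟨fun ⟨hs, hsYZ⟩ => hsYZ.resolve_left (hrY s hs), fun hs => ⟨?_, Or.inr hs⟩⟩
      simpa using H.mul_mem hr (hZ hs)
    rw [hnbrs, Set.ncard_image_of_injective _ (mul_right_injective r)]
  · intro g hg
    have hnbrs : {s ∈ (H : Set G) | g⁻¹ * s ∈ Y ∪ Z} = {s ∈ (H : Set G) | g⁻¹ * s ∈ Y} := by
      refine Set.sep_ext_iff.mpr fun s hs => or_iff_left fun hgs => hg ?_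
      simpa using H.mul_mem hs (H.inv_mem (hZ hgs))
    rw [hnbrs]
    exact h.2 g hg

end Cayley

theorem statement_9_general {G : Type*} [Group G] [Fintype G] (H : Subgroup G)
    (Y : Set G) (κ : ℤ) (τ : ℕ)
    (hκ0 : 0 ≤ κ) (hκ1 : κ ≤ (Nat.card H : ℤ) - 1)
    (hgcd : ((Nat.gcd 2 (Nat.card H - 1) : ℕ) : ℤ) ∣ κ)
    (h : IsRegularSetOfCayley Y (H : Set G) 0 τ) :
    ∃ Z : Set G, Z ⊆ (H : Set G) \ {1} ∧ Z⁻¹ = Z ∧ (Z.ncard : ℤ) = κ ∧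
      IsRegularSetOfCayley (Y ∪ Z) (H : Set G) κ τ := by
  classical
  lift κ to ℕ using hκ0
  set S : Finset G := (H : Set G).toFinset.erase 1
  have hS : S⁻¹ = S := by ext; simp [S]
  have hScard : S.card = Nat.card H - 1 := by simp [S, Finset.card_erase_of_mem]
  have hodd : Odd κ → ∃ t ∈ S, t⁻¹ = t := by
    intro hκ
    have hm : ¬ 2 ∣ Nat.card H - 1 := fun h2 => by
      rw [Nat.gcd_eq_left h2] at hgcd
      exact Nat.not_even_iff_odd.mpr hκ (even_iff_two_dvd.mpr (Int.natCast_dvd_natCast.mp hgcd))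
    have hH : Even (Nat.card H) := by
      have := Nat.card_pos (α := H)
      rw [even_iff_two_dvd]
      omega
    obtain ⟨t, ht1, ht⟩ := exists_ne_one_inv_eq_self_of_even_card hH
    exact ⟨t, by simp [S, ht1], by exact_mod_cast congrArg Subtype.val ht⟩
  obtain ⟨Z, hZS, hZ, hZcard⟩ := Finset.exists_subset_inv_eq_self_card_eq hS (by omega) hodd
  have hZH : (Z : Set G) ⊆ (H : Set G) \ {1} := by simpa [S] using Finset.coe_subset.mpr hZS
  refine ⟨Z, hZH, by rw [← Finset.coe_inv, hZ], by simp [hZcard], ?_⟩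
  simpa [hZcard] using h.union_of_subset (hZH.trans Set.sdiff_subset)

theorem statement_9 {G : Type*} [Group G] [Fintype G] (H : Subgroup G) (hH : H ≠ ⊥)
    (Y : Set G) (hY : IsConnectionSet Y) (κ : ℤ) (τ : ℕ)
    (hκ0 : 0 ≤ κ) (hκ1 : κ ≤ (Nat.card H : ℤ) - 1)
    (hgcd : ((Nat.gcd 2 (Nat.card H - 1) : ℕ) : ℤ) ∣ κ)
    (h : IsRegularSetOfCayley Y (H : Set G) 0 τ) :
    ∃ Z : Set G, Z ⊆ (H : Set G) \ {1} ∧ Z⁻¹ = Z ∧ (Z.ncard : ℤ) = κ ∧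
      IsRegularSetOfCayley (Y ∪ Z) (H : Set G) κ τ :=
  statement_9_general H Y κ τ hκ0 hκ1 hgcd h
end

section
/- Let H be a non-trivial finite group and κ an integer satisfying 0 ≤ κ ≤ |H| − 1 and gcd(2, |H| − 1) ∣ κ. Then there exists an inverse-closed subset Z of H \ {1} with |Z| = κ. -/
/-!
Inversion is an involution of `H \ {1}` whose orbits are singletons (the involutions) and
pairs `{x, x⁻¹}`. Any invariant set with at least two elements contains an invariant
two-element subset (a pair, or two fixed points), so starting from `∅`, or from a single
involution, one can grow inverse-closed sets two elements at a time up to any size `≤ |H| - 1`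
of the right parity. An odd `κ` forces `|H| - 1` odd, so `|H|` is even and Cauchy's theorem
supplies the involution to start from.
-/

open Pointwise

open Finset

namespace Finset

variable {α : Type*} [DecidableEq α] {σ : α → α}

theorem exists_invariant_subset_card_two (hσ : Function.Involutive σ) {r : Finset α}
    (hr : ∀ x ∈ r, σ x ∈ r) (hcard : 2 ≤ r.card) :
    ∃ u ⊆ r, (∀ x ∈ u, σ x ∈ u) ∧ u.card = 2 := by
  have orbit_of_moved {x : α} (hxr : x ∈ r) (hx : σ x ≠ x) :
      ∃ u ⊆ r, (∀ x ∈ u, σ x ∈ u) ∧ u.card = 2 := by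
    refine ⟨{x, σ x}, insert_subset hxr (singleton_subset_iff.2 (hr x hxr)), ?_,
      card_pair hx.symm⟩
    simp only [mem_insert, mem_singleton]
    rintro _ (rfl | rfl)
    · exact Or.inr rfl
    · exact Or.inl (hσ x)
  obtain ⟨x, hxr⟩ := card_pos.1 (by omega : 0 < r.card)
  by_cases hx : σ x = x
  swap
  · exact orbit_of_moved hxr hx
  obtain ⟨y, hy⟩ := card_pos.1 (by rw [card_erase_of_mem hxr]; omega : 0 < (r.erase x).card)
  obtain ⟨hyx, hyr⟩ := mem_erase.1 hy
  by_cases hy : σ y = y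
  swap
  · exact orbit_of_moved hyr hy
  refine ⟨{x, y}, insert_subset hxr (singleton_subset_iff.2 hyr), ?_, card_pair hyx.symm⟩
  simp only [mem_insert, mem_singleton]
  rintro _ (rfl | rfl)
  · exact Or.inl hx
  · exact Or.inr hy

theorem exists_invariant_card_of_subset (hσ : Function.Involutive σ) {s t : Finset α}
    (hs : ∀ x ∈ s, σ x ∈ s) (ht : ∀ x ∈ t, σ x ∈ t) (hts : t ⊆ s) (k : ℕ)
    (hk : t.card + 2 * k ≤ s.card) :
    ∃ u, t ⊆ u ∧ u ⊆ s ∧ (∀ x ∈ u, σ x ∈ u) ∧ u.card = t.card + 2 * k := by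
  induction k with
  | zero => exact ⟨t, Subset.rfl, hts, ht, rfl⟩
  | succ k ih =>
    obtain ⟨u, htu, hus, hu, hu_card⟩ := ih (by omega)
    have hdiff : ∀ x ∈ s \ u, σ x ∈ s \ u := fun x hx => by
      obtain ⟨hxs, hxu⟩ := mem_sdiff.1 hx
      exact mem_sdiff.2 ⟨hs x hxs, fun h => hxu (hσ x ▸ hu _ h)⟩
    obtain ⟨v, hv, hv_inv, hv_card⟩ := exists_invariant_subset_card_two hσ hdiff
      (by rw [card_sdiff_of_subset hus]; omega)
    refine ⟨u ∪ v, htu.trans subset_union_left,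
      union_subset hus (hv.trans sdiff_subset), ?_, ?_⟩
    · simp only [mem_union]
      rintro x (hx | hx)
      exacts [Or.inl (hu x hx), Or.inr (hv_inv x hx)]
    · rw [card_union_of_disjoint (disjoint_of_subset_right hv disjoint_sdiff), hu_card, hv_card]
      ring

theorem coe_inv_eq_of_forall_inv_mem {G : Type*} [Group G] {u : Finset G}
    (hu : ∀ x ∈ u, x⁻¹ ∈ u) : (u : Set G)⁻¹ = u := by
  have hsub : (u : Set G)⁻¹ ⊆ u := fun x hx => inv_inv x ▸ hu _ hx
  exact hsub.antisymm (Set.inv_subset.1 hsub)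

end Finset

theorem exists_inv_closed_finset_card {G : Type*} [Group G] [Finite G] [DecidableEq G] {m : ℕ}
    (hm : m ≤ Nat.card G - 1) (hpar : Even m ∨ 2 ∣ Nat.card G) :
    ∃ u : Finset G, (1 : G) ∉ u ∧ (∀ x ∈ u, x⁻¹ ∈ u) ∧ u.card = m := by
  have := Fintype.ofFinite G
  let s : Finset G := univ.erase 1
  have hs : ∀ x ∈ s, x⁻¹ ∈ s := fun x hx => by simpa [s] using hx
  have hs_card : s.card = Nat.card G - 1 := by
    rw [card_erase_of_mem (mem_univ _), card_univ, Nat.card_eq_fintype_card]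
  have grow {t : Finset G} (ht : ∀ x ∈ t, x⁻¹ ∈ t) (hts : t ⊆ s) (k : ℕ)
      (hk : t.card + 2 * k = m) :
      ∃ u : Finset G, (1 : G) ∉ u ∧ (∀ x ∈ u, x⁻¹ ∈ u) ∧ u.card = m := by
    obtain ⟨u, -, hus, hu, hu_card⟩ :=
      exists_invariant_card_of_subset inv_involutive hs ht hts k (by omega)
    exact ⟨u, fun h => by simpa [s] using hus h, hu, hu_card.trans hk⟩
  obtain ⟨k, rfl | rfl⟩ := Nat.even_or_odd' m
  · exact grow (t := ∅) (by simp) (empty_subset _) k (by simp)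
  have hdvd : 2 ∣ Nat.card G := hpar.resolve_left (by simp [parity_simps])
  have : Fact (Nat.Prime 2) := ⟨Nat.prime_two⟩
  obtain ⟨x, hx⟩ := exists_prime_orderOf_dvd_card' 2 hdvd
  have hx1 : x ≠ 1 := fun h => by simp [h] at hx
  exact grow (t := {x}) (by simp [inv_eq_self_of_orderOf_eq_two hx])
    (by simpa [s] using hx1) k (by simp; ring)

theorem statement_10_general {H : Type*} [Group H] (κ : ℤ)
    (hκ0 : 0 ≤ κ) (hκ1 : κ ≤ (Nat.card H : ℤ) - 1)
    (hgcd : ((Nat.gcd 2 (Nat.card H - 1) : ℕ) : ℤ) ∣ κ) :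
    ∃ Z : Set H, Z ⊆ {(1 : H)}ᶜ ∧ Z⁻¹ = Z ∧ (Z.ncard : ℤ) = κ := by
  classical
  have : Finite H := Nat.finite_of_card_ne_zero (by omega)
  have hcard_pos := Nat.card_pos (α := H)
  lift κ to ℕ using hκ0
  have hpar : Even κ ∨ 2 ∣ Nat.card H := by
    by_cases h2 : 2 ∣ Nat.card H - 1
    · rw [Nat.gcd_eq_left h2] at hgcd
      exact Or.inl (even_iff_two_dvd.2 (by exact_mod_cast hgcd))
    · exact Or.inr (by omega)
  obtain ⟨u, hu1, hu_inv, hu_card⟩ := exists_inv_closed_finset_card (by omega) hpar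
  refine ⟨u, fun x hx h => hu1 (Set.mem_singleton_iff.1 h ▸ hx),
    coe_inv_eq_of_forall_inv_mem hu_inv, ?_⟩
  rw [Set.ncard_coe_finset, hu_card]

theorem statement_10 {H : Type*} [Group H] [Fintype H] [Nontrivial H] (κ : ℤ)
    (hκ0 : 0 ≤ κ) (hκ1 : κ ≤ (Nat.card H : ℤ) - 1)
    (hgcd : ((Nat.gcd 2 (Nat.card H - 1) : ℕ) : ℤ) ∣ κ) :
    ∃ Z : Set H, Z ⊆ {(1 : H)}ᶜ ∧ Z⁻¹ = Z ∧ (Z.ncard : ℤ) = κ :=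
  statement_10_general κ hκ0 hκ1 hgcd
end

section
/- Let G be a finite group, H a subgroup of G, X an inverse-closed subset of G \ {1}, and τ a positive integer. Suppose H is a (0,τ)-regular set of the Cayley graph Cay(G,X), and let Z be any inverse-closed subset of H with |Z| = τ. Then H is a code of G with respect to X ∪ Z with parameter τ, that is, for every g ∈ G there are exactly τ pairs (c,y) ∈ H × (X ∪ Z) such that g = cy. -/
open Pointwise

/- When `g ∈ H`, the factorizations `g = c * y` with `c ∈ H` and `y ∈ X` are ruled out by `κ = 0`,
so the count is `|Z|`; when `g ∉ H`, `y ∈ Z ⊆ H` is impossible and, `X` being inverse-closed,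
the factorizations with `y ∈ X` correspond to the `τ` neighbours of `g` in `H`. -/

section

variable {G : Type*} [Group G]

theorem ncard_factorizations_eq (C Y : Set G) (g : G) :
    {p : G × G | p.1 ∈ C ∧ p.2 ∈ Y ∧ g = p.1 * p.2}.ncard = {c ∈ C | c⁻¹ * g ∈ Y}.ncard := by
  have himage : {p : G × G | p.1 ∈ C ∧ p.2 ∈ Y ∧ g = p.1 * p.2}
      = (fun c ↦ (c, c⁻¹ * g)) '' {c ∈ C | c⁻¹ * g ∈ Y} := by
    ext ⟨c, y⟩
    simp only [Set.mem_ofPred_eq, Set.mem_image, Prod.mk.injEq]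
    constructor
    · rintro ⟨hc, hy, rfl⟩
      exact ⟨c, ⟨hc, by rwa [inv_mul_cancel_left]⟩, rfl, inv_mul_cancel_left c y⟩
    · rintro ⟨c, ⟨hc, hy⟩, rfl, rfl⟩
      exact ⟨hc, hy, (mul_inv_cancel_left c g).symm⟩
  rw [himage, Set.ncard_image_of_injective _ fun a b hab ↦ congrArg Prod.fst hab]

theorem ncard_setOf_inv_mul_mem (Y : Set G) (g : G) : {c | c⁻¹ * g ∈ Y}.ncard = Y.ncard :=
  Set.ncard_preimage_of_injective_subset_range (f := fun c ↦ c⁻¹ * g)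
    (fun a b hab ↦ inv_injective (mul_right_cancel hab))
    fun y _ ↦ ⟨g * y⁻¹, by group⟩

theorem inv_mul_mem_comm {X : Set G} (hX : X⁻¹ = X) {a b : G} : a⁻¹ * b ∈ X ↔ b⁻¹ * a ∈ X := by
  rw [← hX, ← Set.inv_mem_inv, mul_inv_rev, inv_inv, inv_inv, hX]

theorem IsRegularSetOfCayley.inv_mul_notMem [Finite G] {X R : Set G} {τ : ℤ}
    (h : IsRegularSetOfCayley X R 0 τ) {r s : G} (hr : r ∈ R) (hs : s ∈ R) : r⁻¹ * s ∉ X := by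
  have hempty : {s ∈ R | r⁻¹ * s ∈ X} = ∅ :=
    (Set.ncard_eq_zero (Set.toFinite _)).mp (by exact_mod_cast h.1 r hr)
  exact fun hX ↦ hempty.subset ⟨hs, hX⟩

end

theorem statement_11_general {G : Type*} [Group G] [Fintype G] (H : Subgroup G)
    (X : Set G) (hX : IsConnectionSet X) (τ : ℕ)
    (h : IsRegularSetOfCayley X (H : Set G) 0 τ)
    (Z : Set G) (hZH : Z ⊆ (H : Set G)) (hZcard : Z.ncard = τ) :
    IsCodeOfGroup (H : Set G) (X ∪ Z) τ := by
  intro g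
  rw [ncard_factorizations_eq]
  by_cases hg : g ∈ H
  · have hZpart : {c ∈ (H : Set G) | c⁻¹ * g ∈ X ∪ Z} = {c | c⁻¹ * g ∈ Z} := by
      ext c
      refine ⟨fun ⟨hc, hcXZ⟩ ↦ hcXZ.resolve_left (h.inv_mul_notMem hc hg), fun hcZ ↦ ⟨?_, Or.inr hcZ⟩⟩
      simpa using H.mul_mem hg (H.inv_mem (hZH hcZ))
    rw [hZpart, ncard_setOf_inv_mul_mem, hZcard]
  · have hXpart : {c ∈ (H : Set G) | c⁻¹ * g ∈ X ∪ Z} = {s ∈ (H : Set G) | g⁻¹ * s ∈ X} := by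
      ext c
      refine and_congr_right fun hc ↦ ?_
      have hcZ : c⁻¹ * g ∉ Z := fun hcZ ↦ hg ((H.mul_mem_cancel_left (H.inv_mem hc)).mp (hZH hcZ))
      rw [Set.mem_union, or_iff_left hcZ, inv_mul_mem_comm hX.2]
    rw [hXpart]
    exact_mod_cast h.2 g hg

theorem statement_11 {G : Type*} [Group G] [Fintype G] (H : Subgroup G)
    (X : Set G) (hX : IsConnectionSet X) (τ : ℕ) (hτ : 0 < τ)
    (h : IsRegularSetOfCayley X (H : Set G) 0 τ)
    (Z : Set G) (hZH : Z ⊆ (H : Set G)) (hZinv : Z⁻¹ = Z) (hZcard : Z.ncard = τ) :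
    IsCodeOfGroup (H : Set G) (X ∪ Z) τ :=
  statement_11_general H X hX τ h Z hZH hZcard
end

section
/- Let G be a finite group, H a subgroup of G, Y an inverse-closed subset of G containing 1, and λ a positive integer. If H is a code of G with respect to Y with parameter λ, then λ = |H|·|Y|/|G| and H is a (0,λ)-regular set of the Cayley graph Cay(G, Y \ H). -/
open Pointwise

/-!
Counting the pairs `(c, y) ∈ C × Y` according to their product `c * y` gives
`|C| |Y| = λ |G|`. For the regularity, a factorization `g = c * y` is the same as a neighbour
`c` of `g` in `Cay(G, Y)` (as `Y⁻¹ = Y`), so every vertex has exactly `λ` neighbours in `H`;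
an edge from `g` to `s ∈ H` has label `g⁻¹ * s`, which lies in `H` exactly when `g` does, so
removing `H` from the connection set deletes the edges inside `H` and keeps all the others.
-/

open Finset

namespace IsCodeOfGroup

variable {G : Type*} [Group G] {C Y : Set G} {l : ℕ}

theorem mul_card_eq_ncard_mul_ncard [Finite G] (h : IsCodeOfGroup C Y l) :
    l * Nat.card G = C.ncard * Y.ncard := by
  classical
  have := Fintype.ofFinite G
  have hfiber (g : G) : #{p ∈ C.toFinset ×ˢ Y.toFinset | p.1 * p.2 = g} = l := by
    rw [← h g, ← Set.ncard_coe_finset]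
    congr 1
    ext p
    simp [eq_comm, and_assoc]
  calc l * Nat.card G = ∑ g : G, #{p ∈ C.toFinset ×ˢ Y.toFinset | p.1 * p.2 = g} := by
        simp [hfiber, Nat.card_eq_fintype_card, mul_comm]
    _ = #(C.toFinset ×ˢ Y.toFinset) := (card_eq_sum_card_fiberwise (by simp)).symm
    _ = C.ncard * Y.ncard := by simp [Set.ncard_eq_toFinset_card']

theorem ncard_neighbors_eq (hY : Y⁻¹ = Y) (h : IsCodeOfGroup C Y l) (g : G) :
    {s ∈ C | g⁻¹ * s ∈ Y}.ncard = l := by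
  rw [← h g]
  refine Set.ncard_congr (fun s _ => (s, s⁻¹ * g)) ?_ ?_ ?_
  · rintro s ⟨hs, hgs⟩
    refine ⟨hs, ?_, by group⟩
    rw [← hY]
    simpa using hgs
  · intro a b _ _ hab
    exact (Prod.ext_iff.mp hab).1
  · rintro ⟨c, y⟩ ⟨hc, hy, rfl⟩
    refine ⟨c, ⟨hc, ?_⟩, by simp⟩
    rw [← hY] at hy
    simpa using hy

end IsCodeOfGroup

theorem Subgroup.isRegularSetOfCayley_diff {G : Type*} [Group G] (H : Subgroup G)
    (X : Set G) (τ : ℤ) (hτ : ∀ g ∉ H, ({s ∈ (H : Set G) | g⁻¹ * s ∈ X}.ncard : ℤ) = τ) :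
    IsRegularSetOfCayley (X \ H) H 0 τ := by
  refine ⟨fun r hr => ?_, fun g hg => ?_⟩
  · have hempty : {s ∈ (H : Set G) | r⁻¹ * s ∈ X \ H} = ∅ :=
      Set.eq_empty_of_forall_notMem fun s ⟨hs, _, hns⟩ => hns (mul_mem (inv_mem hr) hs)
    rw [hempty, Set.ncard_empty, Nat.cast_zero]
  · rw [← hτ g hg]
    congr 3
    ext s
    refine ⟨fun ⟨hs, hgs, _⟩ => ⟨hs, hgs⟩, fun ⟨hs, hgs⟩ => ⟨hs, hgs, fun hgsH => ?_⟩⟩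
    exact hg (by simpa using mul_mem hs (inv_mem hgsH))

theorem statement_12_general {G : Type*} [Group G] [Fintype G] (H : Subgroup G)
    (Y : Set G) (hYinv : Y⁻¹ = Y) (l : ℕ)
    (h : IsCodeOfGroup (H : Set G) Y l) :
    l = Nat.card H * Y.ncard / Nat.card G ∧
      IsRegularSetOfCayley (Y \ (H : Set G)) (H : Set G) 0 l := by
  refine ⟨?_, H.isRegularSetOfCayley_diff Y l fun g _ => ?_⟩
  · rw [← SetLike.coe_sort_coe, Nat.card_coe_set_eq, ← h.mul_card_eq_ncard_mul_ncard,
      Nat.mul_div_cancel _ Nat.card_pos]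
  · exact_mod_cast h.ncard_neighbors_eq hYinv g

theorem statement_12 {G : Type*} [Group G] [Fintype G] (H : Subgroup G)
    (Y : Set G) (hY1 : (1 : G) ∈ Y) (hYinv : Y⁻¹ = Y) (l : ℕ) (hl : 0 < l)
    (h : IsCodeOfGroup (H : Set G) Y l) :
    l = Nat.card H * Y.ncard / Nat.card G ∧
      IsRegularSetOfCayley (Y \ (H : Set G)) (H : Set G) 0 l :=
  statement_12_general H Y hYinv l h
end
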